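/- arXiv:1307.2478 — 7 statements merged into one kernel-verified Lean document; each statement's English description precedes it below -/
import Mathlib

section
/- Let m>0. There exists a constant C>0 (depending only on m) such that for every λ∈ℂ with Im λ ≠ 0, ∫_{−∞}^{−m} (1/|s−λ|²)·(√(s²−m²)/|s+m|) ds + ∫_{m}^{∞} (1/|s−λ|²)·((s+m)/√(s²−m²)) ds ≤ (4π/|Im λ|)·|Re(λ/k(λ))| + C·max{1/|λ|², 1/|λ−m|², 1/|λ+m|²}. -/
open MeasureTheory

/-- The quasi-momentum `k(λ) = λ·(1 − m²/λ²)^{1/2}` (principal branch). -/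
noncomputable def qmom (m : ℝ) (lam : ℂ) : ℂ := lam * (1 - (m : ℂ) ^ 2 / lam ^ 2) ^ ((1 : ℂ) / 2)

/-! Let `b` be the square root of `λ² − m²` in the upper half-plane, so that `k(λ) = ±b`.
Reflecting `s ↦ -s` moves the first integral to `(m, ∞)`, and since `s + m ≤ 2s` both integrands
are then at most twice `s / √(s² − m²) · (|s − λ|⁻² + |s + λ|⁻²)`. This kernel equals
`Im (2λ / (s² − λ²)) · s / √(s² − m²) / Im λ`, the `s`-derivative of
`Im (λ/b · (log (u − b) − log (u + b))) / Im λ` at `u = √(s² − m²)`. The primitive vanishes at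
infinity and equals `-π Re (λ/b) / Im λ` at `s = m`, because `log (-b) − log b = -πi`; so each
integral is at most `2π Re (λ/b) / Im λ`. -/

open Complex Filter Set Topology

theorem Complex.exists_sq_eq_and_im_pos {w : ℂ} (hw : w.im = 0 → w.re < 0) :
    ∃ b : ℂ, b ^ 2 = w ∧ 0 < b.im := by
  obtain ⟨b, hb⟩ := IsAlgClosed.exists_pow_nat_eq w two_pos
  have hbim : b.im ≠ 0 := by
    intro h0
    have hre : w.re = b.re ^ 2 := by simp [← hb, sq, h0]
    have him : w.im = 0 := by simp [← hb, sq, h0]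
    nlinarith [hw him]
  rcases hbim.lt_or_gt with hneg | hpos
  · exact ⟨-b, by rw [neg_sq, hb], by simpa using hneg⟩
  · exact ⟨b, hb, hpos⟩

theorem exists_sq_eq_sq_sub_sq_of_im_ne_zero (m : ℝ) {lam : ℂ} (hlam : lam.im ≠ 0) :
    ∃ b : ℂ, b ^ 2 = lam ^ 2 - (m : ℂ) ^ 2 ∧ 0 < b.im := by
  refine exists_sq_eq_and_im_pos fun h => ?_
  have hre : lam.re = 0 := by
    refine (mul_eq_zero.mp (?_ : lam.re * lam.im = 0)).resolve_right hlam
    simp only [sq, sub_im, mul_im, ofReal_re, ofReal_im] at h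
    linarith
  have : 0 < lam.im ^ 2 := by positivity
  simp only [sq, sub_re, mul_re, ofReal_re, ofReal_im, hre]
  nlinarith

theorem Complex.tendsto_log_add_sub_log (c : ℂ) :
    Tendsto (fun u : ℝ => log (u + c) - log u) atTop (𝓝 0) := by
  have hlim : Tendsto (fun u : ℝ => log (1 + c / u)) atTop (𝓝 0) := by
    have hdiv : Tendsto (fun u : ℝ => c / (u : ℂ)) atTop (𝓝 0) := by
      rw [tendsto_zero_iff_norm_tendsto_zero]
      simpa using tendsto_const_nhds.div_atTop tendsto_abs_atTop_atTop
    have h1 : Tendsto (fun u : ℝ => 1 + c / u) atTop (𝓝 1) := by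
      simpa using tendsto_const_nhds.add hdiv
    simpa [Function.comp_def] using (continuousAt_clog one_mem_slitPlane).tendsto.comp h1
  refine hlim.congr' ?_
  filter_upwards [eventually_gt_atTop ‖c‖] with u hu
  have hu0 : 0 < u := (norm_nonneg c).trans_lt hu
  have hu0' : (u : ℂ) ≠ 0 := by exact_mod_cast hu0.ne'
  have hne : 1 + c / u ≠ 0 := by
    rw [one_add_div hu0']
    refine div_ne_zero (fun h => ?_) hu0'
    have := congrArg norm (eq_neg_of_add_eq_zero_left h)
    rw [norm_neg, norm_real, Real.norm_of_nonneg hu0.le] at this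
    linarith
  have hsplit : (u : ℂ) + c = (u : ℂ) * (1 + c / u) := by
    field_simp
  rw [hsplit, log_ofReal_mul hu0 hne, ← ofReal_log hu0.le]
  ring

theorem Complex.tendsto_log_sub_sub_log_add (b : ℂ) :
    Tendsto (fun u : ℝ => log (u - b) - log (u + b)) atTop (𝓝 0) := by
  simpa [sub_eq_add_neg] using
    (tendsto_log_add_sub_log (-b)).sub (tendsto_log_add_sub_log b)

theorem Complex.hasDerivAt_log_sub_sub_log_add {b : ℂ} (hb : b.im ≠ 0) (u : ℝ) :
    HasDerivAt (fun u : ℝ => log (u - b) - log (u + b)) (2 * b / ((u : ℂ) ^ 2 - b ^ 2)) u := by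
  have hsub : (u : ℂ) - b ∈ slitPlane := by
    simp [mem_slitPlane_iff, hb]
  have hadd : (u : ℂ) + b ∈ slitPlane := by
    simp [mem_slitPlane_iff, hb]
  have hsub0 := slitPlane_ne_zero hsub
  have hadd0 := slitPlane_ne_zero hadd
  have hd : HasDerivAt (fun z : ℂ => log (z - b) - log (z + b))
      (1 / ((u : ℂ) - b) - 1 / ((u : ℂ) + b)) u :=
    (((hasDerivAt_id (u : ℂ)).sub_const b).clog hsub).sub
      (((hasDerivAt_id (u : ℂ)).add_const b).clog hadd)
  convert hd.comp_ofReal using 1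
  rw [show (u : ℂ) ^ 2 - b ^ 2 = (u - b) * (u + b) by ring]
  field_simp
  ring

theorem Complex.log_neg_sub_log_of_im_pos {b : ℂ} (hb : 0 < b.im) :
    log (-b) - log b = -(Real.pi * I) := by
  apply Complex.ext <;> simp [log_re, log_im, arg_neg_eq_arg_sub_pi_of_im_pos hb]

theorem Complex.im_two_mul_div_sq_sub_sq {lam : ℂ} (hlam : lam.im ≠ 0) (s : ℝ) :
    (2 * lam / ((s : ℂ) ^ 2 - lam ^ 2)).im
      = lam.im * (1 / ‖(s : ℂ) - lam‖ ^ 2 + 1 / ‖(s : ℂ) + lam‖ ^ 2) := by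
  have hsub : (s : ℂ) - lam ≠ 0 := fun h => hlam (by simpa using congrArg im h)
  have hadd : (s : ℂ) + lam ≠ 0 := fun h => hlam (by simpa using congrArg im h)
  have hsplit : 2 * lam / ((s : ℂ) ^ 2 - lam ^ 2) = ((s : ℂ) - lam)⁻¹ - ((s : ℂ) + lam)⁻¹ := by
    rw [show (s : ℂ) ^ 2 - lam ^ 2 = (s - lam) * (s + lam) by ring]
    field_simp
    ring
  rw [hsplit, sub_im, inv_im, inv_im, ← Complex.sq_norm, ← Complex.sq_norm]
  simp only [sub_im, add_im, ofReal_im]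
  ring

noncomputable def evenKernel (m : ℝ) (lam : ℂ) (s : ℝ) : ℝ :=
  s / √(s ^ 2 - m ^ 2) * (1 / ‖(s : ℂ) - lam‖ ^ 2 + 1 / ‖(s : ℂ) + lam‖ ^ 2)

theorem evenKernel_nonneg {m s : ℝ} (hs : 0 ≤ s) (lam : ℂ) : 0 ≤ evenKernel m lam s := by
  unfold evenKernel
  positivity

theorem hasDerivAt_evenKernel_primitive {m s : ℝ} (hs : m ^ 2 < s ^ 2) {lam b : ℂ}
    (hlam : lam.im ≠ 0) (hb : b ^ 2 = lam ^ 2 - m ^ 2) (hbim : b.im ≠ 0) :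
    HasDerivAt (fun s : ℝ => (lam / b * (log (√(s ^ 2 - m ^ 2) - b)
      - log (√(s ^ 2 - m ^ 2) + b))).im / lam.im) (evenKernel m lam s) s := by
  have hs2 : 0 < s ^ 2 - m ^ 2 := sub_pos.mpr hs
  have hb0 : b ≠ 0 := fun h => hbim (by simp [h])
  have hsqrt : HasDerivAt (fun s : ℝ => √(s ^ 2 - m ^ 2)) (s / √(s ^ 2 - m ^ 2)) s := by
    convert ((hasDerivAt_pow 2 s).sub_const (m ^ 2)).sqrt hs2.ne' using 1
    field_simp
    ring
  have hL := ((hasDerivAt_log_sub_sub_log_add hbim (√(s ^ 2 - m ^ 2))).scomp s hsqrt).const_mul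
    (lam / b)
  have hIm : HasDerivAt (fun s : ℝ => (lam / b * (log (√(s ^ 2 - m ^ 2) - b)
      - log (√(s ^ 2 - m ^ 2) + b))).im)
      (lam / b * ((s / √(s ^ 2 - m ^ 2)) • (2 * b / ((√(s ^ 2 - m ^ 2) : ℂ) ^ 2 - b ^ 2)))).im s :=
    imCLM.hasFDerivAt.comp_hasDerivAt s hL
  refine (hIm.div_const lam.im).congr_deriv ?_
  have hden : ((√(s ^ 2 - m ^ 2) : ℝ) : ℂ) ^ 2 - b ^ 2 = (s : ℂ) ^ 2 - lam ^ 2 := by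
    rw [← ofReal_pow, Real.sq_sqrt hs2.le, hb]
    push_cast
    ring
  have hfactor : lam / b * ((s / √(s ^ 2 - m ^ 2)) • (2 * b / ((s : ℂ) ^ 2 - lam ^ 2)))
      = (s / √(s ^ 2 - m ^ 2)) • (2 * lam / ((s : ℂ) ^ 2 - lam ^ 2)) := by
    rw [real_smul, real_smul]
    field_simp
  rw [hden, hfactor, smul_im, im_two_mul_div_sq_sub_sq hlam, evenKernel, smul_eq_mul]
  field_simp

theorem integral_evenKernel {m : ℝ} (hm : 0 ≤ m) {lam b : ℂ} (hlam : lam.im ≠ 0)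
    (hb : b ^ 2 = lam ^ 2 - m ^ 2) (hbim : 0 < b.im) :
    IntegrableOn (evenKernel m lam) (Ioi m) ∧
      ∫ s in Ioi m, evenKernel m lam s = Real.pi * (lam / b).re / lam.im := by
  set L : ℝ → ℂ := fun u => log (u - b) - log (u + b)
  set Φ : ℝ → ℝ := fun s => (lam / b * L √(s ^ 2 - m ^ 2)).im / lam.im
  have hderiv : ∀ s ∈ Ioi m, HasDerivAt Φ (evenKernel m lam s) s := fun s hs =>
    hasDerivAt_evenKernel_primitive (by nlinarith [mem_Ioi.mp hs]) hlam hb hbim.ne'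
  have hnonneg : ∀ s ∈ Ioi m, 0 ≤ evenKernel m lam s := fun s hs =>
    evenKernel_nonneg (hm.trans (mem_Ioi.mp hs).le) lam
  have hL : Continuous L := continuous_iff_continuousAt.mpr fun u =>
    (hasDerivAt_log_sub_sub_log_add hbim.ne' u).continuousAt
  have hcont : ContinuousWithinAt Φ (Ici m) m := by
    apply Continuous.continuousWithinAt
    fun_prop
  have hlim : Tendsto Φ atTop (𝓝 0) := by
    have hsqrt : Tendsto (fun s : ℝ => √(s ^ 2 - m ^ 2)) atTop atTop :=
      Real.tendsto_sqrt_atTop.comp <| tendsto_atTop_add_const_right _ _ <|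
        tendsto_pow_atTop two_ne_zero
    have := ((continuous_im.tendsto _).comp
      (((tendsto_log_sub_sub_log_add b).comp hsqrt).const_mul (lam / b))).div_const lam.im
    simpa only [Function.comp_def, mul_zero, zero_im, zero_div] using this
  have hΦm : Φ m = -(Real.pi * (lam / b).re) / lam.im := by
    simp only [Φ, L, sub_self, Real.sqrt_zero, ofReal_zero, zero_sub, zero_add,
      log_neg_sub_log_of_im_pos hbim]
    simp [mul_im, mul_comm]
  refine ⟨integrableOn_Ioi_deriv_of_nonneg hcont hderiv hnonneg hlim, ?_⟩
  rw [integral_Ioi_of_hasDerivAt_of_nonneg hcont hderiv hnonneg hlim, hΦm]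
  ring

theorem mul_div_sqrt_le_two_mul_evenKernel {m s t : ℝ} (hm : 0 ≤ m) (hms : m < s) {lam : ℂ}
    (ht0 : 0 ≤ t) (ht : t ≤ 1 / ‖(s : ℂ) - lam‖ ^ 2 + 1 / ‖(s : ℂ) + lam‖ ^ 2) :
    t * ((s + m) / √(s ^ 2 - m ^ 2)) ≤ 2 * evenKernel m lam s := by
  have hweight : (s + m) / √(s ^ 2 - m ^ 2) ≤ 2 * (s / √(s ^ 2 - m ^ 2)) := by
    rw [← mul_div_assoc]
    gcongr
    linarith
  calc t * ((s + m) / √(s ^ 2 - m ^ 2)) ≤ t * (2 * (s / √(s ^ 2 - m ^ 2))) := by gcongr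
    _ ≤ _ := by
      rw [evenKernel]
      have : 0 ≤ s / √(s ^ 2 - m ^ 2) := div_nonneg (by linarith) (Real.sqrt_nonneg _)
      nlinarith

theorem integral_mul_div_sqrt_le {m : ℝ} (hm : 0 ≤ m) {lam : ℂ}
    (hint : IntegrableOn (evenKernel m lam) (Ioi m)) {t : ℝ → ℝ} (ht0 : ∀ s, 0 ≤ t s)
    (ht : ∀ s, t s ≤ 1 / ‖(s : ℂ) - lam‖ ^ 2 + 1 / ‖(s : ℂ) + lam‖ ^ 2) :
    ∫ s in Ioi m, t s * ((s + m) / √(s ^ 2 - m ^ 2)) ≤ 2 * ∫ s in Ioi m, evenKernel m lam s := by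
  rw [← integral_const_mul]
  refine integral_mono_of_nonneg ?_ (hint.const_mul 2) ?_ <;>
    filter_upwards [ae_restrict_mem measurableSet_Ioi] with s (hs : m < s)
  · have : 0 ≤ s + m := by linarith
    have := ht0 s
    positivity
  · exact mul_div_sqrt_le_two_mul_evenKernel hm hs (ht0 s) (ht s)

theorem setIntegral_Iic_neg_eq_setIntegral_Ioi {m : ℝ} (lam : ℂ) :
    ∫ s in Iic (-m), 1 / ‖(s : ℂ) - lam‖ ^ 2 * (√(s ^ 2 - m ^ 2) / |s + m|)
      = ∫ s in Ioi m, 1 / ‖(s : ℂ) + lam‖ ^ 2 * ((s + m) / √(s ^ 2 - m ^ 2)) := by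
  have hrefl := integral_comp_neg_Iic (-m)
    fun s : ℝ => 1 / ‖(s : ℂ) + lam‖ ^ 2 * ((s + m) / √(s ^ 2 - m ^ 2))
  rw [neg_neg] at hrefl
  rw [← hrefl]
  refine setIntegral_congr_fun measurableSet_Iic fun s (hs : s ≤ -m) => ?_
  have hnorm : ‖((-s : ℝ) : ℂ) + lam‖ = ‖(s : ℂ) - lam‖ := by
    rw [← norm_neg]
    push_cast
    ring_nf
  rw [hnorm, neg_sq, abs_of_nonpos (by linarith : s + m ≤ 0)]
  congr 1
  rcases le_or_gt (s ^ 2 - m ^ 2) 0 with hx | hx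
  · simp [Real.sqrt_eq_zero_of_nonpos hx]
  · have hsm : -(s + m) ≠ 0 := fun h => by
      have : s = -m := by linarith
      subst this; simp at hx
    rw [div_eq_div_iff hsm (Real.sqrt_pos.mpr hx).ne', Real.mul_self_sqrt hx.le]
    ring

theorem qmom_sq (m : ℝ) {lam : ℂ} (hlam : lam ≠ 0) : qmom m lam ^ 2 = lam ^ 2 - (m : ℂ) ^ 2 := by
  rw [qmom, mul_pow, one_div, cpow_ofNat_inv_pow]
  field_simp

theorem abs_re_div_qmom_eq {m : ℝ} {lam b : ℂ} (hlam : lam ≠ 0) (hb : b ^ 2 = lam ^ 2 - m ^ 2) :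
    |(lam / qmom m lam).re| = |(lam / b).re| := by
  rcases sq_eq_sq_iff_eq_or_eq_neg.mp ((qmom_sq m hlam).trans hb.symm) with h | h <;>
    simp [h, div_neg]

theorem integral_Iic_add_integral_Ici_le {m : ℝ} (hm : 0 ≤ m) {lam b : ℂ} (hlam : lam.im ≠ 0)
    (hb : b ^ 2 = lam ^ 2 - m ^ 2) (hbim : 0 < b.im) :
    (∫ s in Iic (-m), 1 / ‖(s : ℂ) - lam‖ ^ 2 * (√(s ^ 2 - m ^ 2) / |s + m|))
      + (∫ s in Ici m, 1 / ‖(s : ℂ) - lam‖ ^ 2 * ((s + m) / √(s ^ 2 - m ^ 2)))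
      ≤ 4 * (Real.pi * (lam / b).re / lam.im) := by
  obtain ⟨hint, hval⟩ := integral_evenKernel hm hlam hb hbim
  have hinv_sq : ∀ c : ℂ, 0 ≤ 1 / ‖c‖ ^ 2 := fun c => by positivity
  have hA := (setIntegral_Iic_neg_eq_setIntegral_Ioi (m := m) lam).trans_le <| integral_mul_div_sqrt_le hm hint
    (fun _ => hinv_sq _) fun _ => le_add_of_nonneg_left (hinv_sq _)
  have hB := integral_mul_div_sqrt_le hm hint
    (fun _ => hinv_sq _) fun _ => le_add_of_nonneg_right (hinv_sq _)
  rw [← integral_Ici_eq_integral_Ioi] at hB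
  linarith

theorem stmt2 (m : ℝ) (hm : 0 < m) :
    ∃ C > (0 : ℝ), ∀ lam : ℂ, lam.im ≠ 0 →
      (∫ s in Set.Iic (-m), (1 / ‖(s : ℂ) - lam‖ ^ 2)
            * (Real.sqrt (s ^ 2 - m ^ 2) / |s + m|))
        + (∫ s in Set.Ici m, (1 / ‖(s : ℂ) - lam‖ ^ 2)
            * ((s + m) / Real.sqrt (s ^ 2 - m ^ 2)))
      ≤ (4 * Real.pi / |lam.im|) * |(lam / qmom m lam).re|
        + C * max (1 / ‖lam‖ ^ 2)
            (max (1 / ‖lam - (m : ℂ)‖ ^ 2)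
              (1 / ‖lam + (m : ℂ)‖ ^ 2)) := by
  refine ⟨1, one_pos, fun lam hlam => ?_⟩
  have hlam0 : lam ≠ 0 := by rintro rfl; simp at hlam
  obtain ⟨b, hb, hbim⟩ := exists_sq_eq_sq_sub_sq_of_im_ne_zero m hlam
  have hC : 0 ≤ 1 * max (1 / ‖lam‖ ^ 2) (max (1 / ‖lam - (m : ℂ)‖ ^ 2) (1 / ‖lam + (m : ℂ)‖ ^ 2)) :=
    by positivity
  calc _ ≤ 4 * (Real.pi * (lam / b).re / lam.im) :=
        integral_Iic_add_integral_Ici_le hm.le hlam hb hbim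
    _ ≤ |4 * (Real.pi * (lam / b).re / lam.im)| := le_abs_self _
    _ = 4 * Real.pi / |lam.im| * |(lam / qmom m lam).re| := by
      rw [abs_re_div_qmom_eq hlam0 hb, abs_mul, abs_div, abs_mul, abs_of_pos Real.pi_pos,
        abs_of_pos four_pos]
      ring
    _ ≤ _ := le_add_of_nonneg_right hC
end

section
/- Let m>0, γ>0, and let p₁,p₂,q : [0,∞)→ℝ be integrable functions vanishing on (γ,∞). Let λ ∈ ℂ∖[−m,m] and define χⁿ(x,λ) by the recursion χ⁰(λ)=(k₀(λ),1)ᵀ, χ^{n+1}(x,λ)=∫_x^γ G(x,t,λ)·(iσ₂)·V(t)·χⁿ(t,λ) dt. Then for every x ∈ [0,γ] the series χ(x,λ) = Σ_{n≥0} χⁿ(x,λ) converges absolutely and its sum satisfies |χ(x,λ)| ≤ K₂(λ)·e^{(γ−x)(|η|−η)}·exp( K₁(λ)·∫_x^γ (|p₁(t)|+|p₂(t)|+2|q(t)|) dt ), where η = Im k(λ). -/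
/-!
For `x ≤ t` the entries of `G(x,t)` are at most `K₁ e^{(t−x)(|η|−η)}`, so the integrand of
`χⁿ⁺¹(x)` is bounded by `e^{(t−x)(|η|−η)} w(t) |χⁿ(t)|` with `w = K₁ (|p₁| + |p₂| + 2|q|)`.
With `F(y) = ∫_y^γ w`, induction gives `|χⁿ(y)| ≤ K₂ e^{(γ−y)(|η|−η)} F(y)ⁿ / n!`, the step being
`∫_y^γ w Fⁿ = F(y)ⁿ⁺¹ / (n + 1)` (fundamental theorem of calculus for the absolutely continuous
`F`). Summing the exponential series gives both claims.
-/

open MeasureTheory Matrix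

/-- `k₀(λ) = (λ+m)/(i·k(λ))`. -/
noncomputable def kzero (m : ℝ) (lam : ℂ) : ℂ := (lam + (m : ℂ)) / (Complex.I * qmom m lam)

/-- `K₁(λ) = max(|k₀(λ)|, |k₀(λ)|⁻¹)`. -/
noncomputable def K1 (m : ℝ) (lam : ℂ) : ℝ :=
  max ‖kzero m lam‖ ‖kzero m lam‖⁻¹

/-- `K₂(λ) = max(|k₀(λ)|, 1)`. -/
noncomputable def K2 (m : ℝ) (lam : ℂ) : ℝ := max ‖kzero m lam‖ 1

/-- The 2×2 kernel `G(x,t,λ)`. -/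
noncomputable def Gker (m : ℝ) (lam : ℂ) (x t : ℝ) : Matrix (Fin 2) (Fin 2) ℂ :=
  (1 / 2 : ℂ) •
    !![1 + Complex.exp (-2 * Complex.I * qmom m lam * ((x : ℂ) - (t : ℂ))),
        kzero m lam * (1 - Complex.exp (-2 * Complex.I * qmom m lam * ((x : ℂ) - (t : ℂ))));
      (1 - Complex.exp (-2 * Complex.I * qmom m lam * ((x : ℂ) - (t : ℂ)))) / kzero m lam,
        1 + Complex.exp (-2 * Complex.I * qmom m lam * ((x : ℂ) - (t : ℂ)))]

/-- `iσ₂`. -/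
def iSigma2 : Matrix (Fin 2) (Fin 2) ℂ := !![0, 1; -1, 0]

/-- The potential matrix `V(t)`. -/
noncomputable def Vmat (p₁ p₂ q : ℝ → ℝ) (t : ℝ) : Matrix (Fin 2) (Fin 2) ℂ :=
  !![(p₁ t : ℂ), (q t : ℂ); (q t : ℂ), (p₂ t : ℂ)]

open Set intervalIntegral
open scoped Nat

section Primitive

variable {w : ℝ → ℝ} {a b : ℝ}

theorem AbsolutelyContinuousOnInterval.fun_pow {f : ℝ → ℝ}
    (hf : AbsolutelyContinuousOnInterval f a b) (n : ℕ) :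
    AbsolutelyContinuousOnInterval (fun t => f t ^ n) a b := by
  induction n with
  | zero =>
    simpa using (LipschitzWith.const (1 : ℝ)).lipschitzOnWith.absolutelyContinuousOnInterval
  | succ n ih => simpa only [pow_succ] using ih.fun_mul hf

theorem IntervalIntegrable.absolutelyContinuousOnInterval_integral_left
    (hw : IntervalIntegrable w volume a b) {c : ℝ} (hc : c ∈ uIcc a b) :
    AbsolutelyContinuousOnInterval (fun t => ∫ s in t..c, w s) a b := by
  simpa only [integral_symm c] using
    (hw.absolutelyContinuousOnInterval_intervalIntegral hc).fun_neg

theorem integral_mul_pow_integral (hw : IntervalIntegrable w volume a b) (n : ℕ) :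
    ∫ t in a..b, w t * (∫ s in t..b, w s) ^ n = (∫ s in a..b, w s) ^ (n + 1) / (n + 1) := by
  set F : ℝ → ℝ := fun t => ∫ s in t..b, w s
  have hderiv : ∀ᵐ t, t ∈ uIoc a b →
      deriv (fun t => F t ^ (n + 1)) t = -((n + 1) * (w t * F t ^ n)) := by
    filter_upwards [hw.ae_hasDerivAt_integral] with t ht htab
    have hFt : HasDerivAt F (-w t) t := by
      simpa only [F, integral_symm b] using (ht (uIoc_subset_uIcc htab) b right_mem_uIcc).fun_neg
    rw [(hFt.fun_pow (n + 1)).deriv]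
    push_cast
    ring
  have hFTC := ((hw.absolutelyContinuousOnInterval_integral_left right_mem_uIcc).fun_pow
    (n + 1)).integral_deriv_eq_sub
  rw [integral_congr_ae hderiv, intervalIntegral.integral_neg,
    intervalIntegral.integral_const_mul] at hFTC
  simp only [integral_same, zero_pow n.succ_ne_zero, zero_sub, neg_inj] at hFTC
  rw [eq_div_iff (by positivity), mul_comm]
  exact hFTC

end Primitive

section Iteration

variable {E : Type*} [NormedAddCommGroup E]

theorem norm_le_exp_mul_pow_div_factorial_of_volterra [NormedSpace ℝ E] {χ : ℕ → ℝ → E}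
    {T : ℕ → ℝ → ℝ → E} {w : ℝ → ℝ} {a b c A : ℝ} (hw : IntervalIntegrable w volume a b)
    (hw0 : ∀ t ∈ Icc a b, 0 ≤ w t)
    (h0 : ∀ y ∈ Icc a b, ‖χ 0 y‖ ≤ A * Real.exp ((b - y) * c))
    (hχT : ∀ n, ∀ y ∈ Icc a b, χ (n + 1) y = ∫ t in y..b, T n y t)
    (hT : ∀ n, ∀ y ∈ Icc a b, ∀ t ∈ Ioc y b,
      ‖T n y t‖ ≤ Real.exp ((t - y) * c) * w t * ‖χ n t‖) (n : ℕ) :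
    ∀ y ∈ Icc a b, ‖χ n y‖ ≤ A * Real.exp ((b - y) * c) * (∫ s in y..b, w s) ^ n / n ! := by
  induction n with
  | zero => simpa using h0
  | succ n ih =>
    intro y hy
    have hsub : Icc y b ⊆ Icc a b := Icc_subset_Icc_left hy.1
    have hwy : IntervalIntegrable w volume y b :=
      hw.mono_set (by simpa [uIcc_of_le hy.2, uIcc_of_le (hy.1.trans hy.2)] using hsub)
    set F : ℝ → ℝ := fun t => ∫ s in t..b, w s
    have hF : ContinuousOn F (uIcc y b) :=
      (hwy.absolutelyContinuousOnInterval_integral_left right_mem_uIcc).continuousOn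
    have hbound : ∀ t ∈ Ioc y b, ‖T n y t‖
        ≤ A * Real.exp ((b - y) * c) / n ! * (w t * F t ^ n) := by
      intro t ht
      have ht' : t ∈ Icc a b := hsub (Ioc_subset_Icc_self ht)
      calc ‖T n y t‖ ≤ Real.exp ((t - y) * c) * w t * ‖χ n t‖ := hT n y hy t ht
        _ ≤ Real.exp ((t - y) * c) * w t * (A * Real.exp ((b - t) * c) * F t ^ n / n !) := by
          gcongr
          · exact mul_nonneg (Real.exp_nonneg _) (hw0 t ht')
          · exact ih t ht'
        _ = A * Real.exp ((t - y) * c + (b - t) * c) / n ! * (w t * F t ^ n) := by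
          rw [Real.exp_add]; ring
        _ = A * Real.exp ((b - y) * c) / n ! * (w t * F t ^ n) := by ring_nf
    calc ‖χ (n + 1) y‖ = ‖∫ t in y..b, T n y t‖ := by rw [hχT n y hy]
      _ ≤ ∫ t in y..b, A * Real.exp ((b - y) * c) / n ! * (w t * F t ^ n) :=
        norm_integral_le_of_norm_le hy.2 (ae_of_all _ hbound)
          ((hwy.mul_continuousOn (hF.pow n)).const_mul _)
      _ = A * Real.exp ((b - y) * c) * F y ^ (n + 1) / (n + 1) ! := by
        rw [intervalIntegral.integral_const_mul, integral_mul_pow_integral hwy,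
          Nat.factorial_succ, Nat.cast_mul]
        field_simp
        push_cast
        ring

theorem Real.hasSum_mul_pow_div_factorial (C r : ℝ) :
    HasSum (fun n => C * r ^ n / n !) (C * Real.exp r) := by
  have h := (NormedSpace.exp_series_hasSum_exp' (𝕂 := ℝ) r).mul_left C
  rw [← Real.exp_eq_exp_ℝ] at h
  simpa only [smul_eq_mul, mul_div_assoc, inv_mul_eq_div] using h

theorem summable_norm_of_norm_le_mul_pow_div_factorial {f : ℕ → E} {C r : ℝ}
    (hf : ∀ n, ‖f n‖ ≤ C * r ^ n / n !) : Summable (fun n => ‖f n‖) :=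
  (Real.hasSum_mul_pow_div_factorial C r).summable.of_nonneg_of_le (fun _ => norm_nonneg _) hf

theorem norm_tsum_le_mul_exp_of_norm_le_mul_pow_div_factorial {f : ℕ → E} {C r : ℝ}
    (hf : ∀ n, ‖f n‖ ≤ C * r ^ n / n !) : ‖∑' n, f n‖ ≤ C * Real.exp r :=
  have hsum := summable_norm_of_norm_le_mul_pow_div_factorial hf
  (norm_tsum_le_tsum_norm hsum).trans
    (hasSum_le hf hsum.hasSum (Real.hasSum_mul_pow_div_factorial C r))

end Iteration

theorem Matrix.norm_mulVec_le_of_forall_norm_apply_le {ι κ 𝕜 : Type*} [Fintype ι] [Fintype κ]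
    [SeminormedRing 𝕜] {A : Matrix ι κ 𝕜} {C : ℝ} (hC : 0 ≤ C) (hA : ∀ i j, ‖A i j‖ ≤ C)
    (v : κ → 𝕜) : ‖A *ᵥ v‖ ≤ C * ∑ j, ‖v j‖ := by
  refine (pi_norm_le_iff_of_nonneg (by positivity)).mpr fun i => ?_
  calc ‖(A *ᵥ v) i‖ ≤ ∑ j, ‖A i j‖ * ‖v j‖ :=
        (norm_sum_le _ _).trans (Finset.sum_le_sum fun j _ => norm_mul_le _ _)
    _ ≤ ∑ j, C * ‖v j‖ := by gcongr with j; exact hA i j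
    _ = C * ∑ j, ‖v j‖ := (Finset.mul_sum _ _ _).symm

theorem Complex.norm_exp_neg_two_mul_I_mul_le (k : ℂ) {x t : ℝ} (hxt : x ≤ t) :
    ‖Complex.exp (-2 * Complex.I * k * ((x : ℂ) - (t : ℂ)))‖
      ≤ Real.exp ((t - x) * (|k.im| - k.im)) := by
  rw [Complex.norm_exp, Real.exp_le_exp, ← Complex.ofReal_sub]
  simp only [Complex.mul_re, Complex.mul_im, Complex.ofReal_re, Complex.ofReal_im, Complex.I_re,
    Complex.I_im]
  norm_num
  nlinarith [neg_abs_le k.im, sub_nonneg.mpr hxt]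

theorem kzero_ne_zero {m : ℝ} (hm : 0 ≤ m) {lam : ℂ}
    (hlam : ∀ t : ℝ, t ∈ Icc (-m) m → (t : ℂ) ≠ lam) : kzero m lam ≠ 0 := by
  have hlam0 : lam ≠ 0 := fun h => hlam 0 ⟨by linarith, hm⟩ (by simp [h])
  have hlam_add : lam + m ≠ 0 := fun h =>
    hlam (-m) ⟨le_rfl, by linarith⟩ (by push_cast; linear_combination -h)
  have hlam_sub : lam - m ≠ 0 := fun h =>
    hlam m ⟨by linarith, le_rfl⟩ (by linear_combination -h)
  have hqmom : qmom m lam ≠ 0 := by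
    refine mul_ne_zero hlam0 fun h => ?_
    have h1 : 1 - (m : ℂ) ^ 2 / lam ^ 2 = 0 := ((Complex.cpow_eq_zero_iff _ _).mp h).1
    field_simp at h1
    exact mul_ne_zero hlam_sub hlam_add (by linear_combination h1)
  exact div_ne_zero hlam_add (mul_ne_zero Complex.I_ne_zero hqmom)

theorem one_le_K1 {m : ℝ} {lam : ℂ} (hk : kzero m lam ≠ 0) : 1 ≤ K1 m lam := by
  rcases le_total ‖kzero m lam‖ 1 with h | h
  · exact le_max_of_le_right (one_le_inv₀ (norm_pos_iff.mpr hk) |>.mpr h)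
  · exact le_max_of_le_left h

theorem norm_Gker_apply_le {m : ℝ} {lam : ℂ} (hk : kzero m lam ≠ 0) {x t : ℝ} (hxt : x ≤ t)
    (i j : Fin 2) :
    ‖Gker m lam x t i j‖
      ≤ K1 m lam * Real.exp ((t - x) * (|(qmom m lam).im| - (qmom m lam).im)) := by
  set e := Complex.exp (-2 * Complex.I * qmom m lam * ((x : ℂ) - (t : ℂ)))
  set E := Real.exp ((t - x) * (|(qmom m lam).im| - (qmom m lam).im))
  have he : ‖e‖ ≤ E := Complex.norm_exp_neg_two_mul_I_mul_le _ hxt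
  have hE : 1 ≤ E :=
    Real.one_le_exp (mul_nonneg (sub_nonneg.2 hxt) (sub_nonneg.2 (le_abs_self _)))
  have hadd : ‖1 + e‖ ≤ 2 * E := (norm_add_le _ _).trans (by rw [norm_one]; linarith)
  have hsub : ‖1 - e‖ ≤ 2 * E := (norm_sub_le _ _).trans (by rw [norm_one]; linarith)
  have hK : 1 ≤ K1 m lam := one_le_K1 hk
  have hk₁ : ‖kzero m lam‖ ≤ K1 m lam := le_max_left _ _
  have hk₂ : ‖kzero m lam‖⁻¹ ≤ K1 m lam := le_max_right _ _
  have hG : Gker m lam x t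
      = (1 / 2 : ℂ) • !![1 + e, kzero m lam * (1 - e); (1 - e) / kzero m lam, 1 + e] := rfl
  rw [hG]
  fin_cases i <;> fin_cases j <;> simp
  · nlinarith
  · nlinarith [norm_nonneg (kzero m lam)]
  · rw [div_eq_inv_mul]
    nlinarith [inv_nonneg.mpr (norm_nonneg (kzero m lam))]
  · nlinarith

theorem sum_norm_iSigma2_mul_Vmat_mulVec_le (p₁ p₂ q : ℝ → ℝ) (t : ℝ) (v : Fin 2 → ℂ) :
    ∑ j, ‖((iSigma2 * Vmat p₁ p₂ q t) *ᵥ v) j‖ ≤ (|p₁ t| + |p₂ t| + 2 * |q t|) * ‖v‖ := by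
  have hrow : ∀ a b : ℝ, ‖(a : ℂ) * v 0 + (b : ℂ) * v 1‖ ≤ (|a| + |b|) * ‖v‖ := fun a b =>
    calc ‖(a : ℂ) * v 0 + (b : ℂ) * v 1‖ ≤ |a| * ‖v 0‖ + |b| * ‖v 1‖ := by
          simpa only [norm_mul, Complex.norm_real, Real.norm_eq_abs] using
            norm_add_le ((a : ℂ) * v 0) ((b : ℂ) * v 1)
      _ ≤ |a| * ‖v‖ + |b| * ‖v‖ := by gcongr <;> exact norm_le_pi_norm v _
      _ = (|a| + |b|) * ‖v‖ := by ring
  have hM : iSigma2 * Vmat p₁ p₂ q t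
      = !![(q t : ℂ), (p₂ t : ℂ); ((-p₁ t : ℝ) : ℂ), ((-q t : ℝ) : ℂ)] := by
    ext i j; fin_cases i <;> fin_cases j <;> simp [iSigma2, Vmat]
  have h₀ := hrow (q t) (p₂ t)
  have h₁ := hrow (-p₁ t) (-q t)
  rw [abs_neg, abs_neg] at h₁
  rw [hM, Fin.sum_univ_two]
  simp only [mulVec, dotProduct, Fin.sum_univ_two, of_apply, cons_val', cons_val_zero,
    cons_val_one, empty_val', cons_val_fin_one]
  linarith

theorem norm_Gker_mul_iSigma2_mul_Vmat_mulVec_le {m : ℝ} {lam : ℂ} (hk : kzero m lam ≠ 0)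
    (p₁ p₂ q : ℝ → ℝ) {x t : ℝ} (hxt : x ≤ t) (v : Fin 2 → ℂ) :
    ‖(Gker m lam x t * iSigma2 * Vmat p₁ p₂ q t) *ᵥ v‖
      ≤ Real.exp ((t - x) * (|(qmom m lam).im| - (qmom m lam).im))
        * (K1 m lam * (|p₁ t| + |p₂ t| + 2 * |q t|)) * ‖v‖ := by
  have hK : 0 ≤ K1 m lam := zero_le_one.trans (one_le_K1 hk)
  -- Entrywise bounds on `G` paired with the ℓ¹ norm of `iσ₂ V v` give the weight
  -- `|p₁| + |p₂| + 2|q|`; sup-norm operator bounds on both factors would cost a factor 2.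
  rw [Matrix.mul_assoc, ← Matrix.mulVec_mulVec]
  calc _ ≤ K1 m lam * Real.exp ((t - x) * (|(qmom m lam).im| - (qmom m lam).im))
          * ∑ j, ‖((iSigma2 * Vmat p₁ p₂ q t) *ᵥ v) j‖ :=
        norm_mulVec_le_of_forall_norm_apply_le (by positivity) (norm_Gker_apply_le hk hxt) _
    _ ≤ K1 m lam * Real.exp ((t - x) * (|(qmom m lam).im| - (qmom m lam).im))
          * ((|p₁ t| + |p₂ t| + 2 * |q t|) * ‖v‖) := by
        gcongr
        exact sum_norm_iSigma2_mul_Vmat_mulVec_le p₁ p₂ q t v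
    _ = _ := by ring

theorem norm_kzero_vec_le_K2 (m : ℝ) (lam : ℂ) : ‖![kzero m lam, 1]‖ ≤ K2 m lam := by
  refine (pi_norm_le_iff_of_nonneg (zero_le_one.trans (le_max_right _ _))).mpr fun i => ?_
  fin_cases i
  · exact le_max_left _ _
  · simp

theorem stmt4_general (m γ : ℝ) (hm : 0 < m) (p₁ p₂ q : ℝ → ℝ)
    (hp₁ : IntegrableOn p₁ (Set.Ici 0)) (hp₂ : IntegrableOn p₂ (Set.Ici 0))
    (hq : IntegrableOn q (Set.Ici 0))
    (lam : ℂ) (hlam : ∀ t : ℝ, t ∈ Set.Icc (-m) m → (t : ℂ) ≠ lam)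
    (χ : ℕ → ℝ → Fin 2 → ℂ)
    (hχ0 : ∀ x : ℝ, χ 0 x = ![kzero m lam, 1])
    (hχs : ∀ n : ℕ, ∀ x : ℝ,
      χ (n + 1) x
        = ∫ t in x..γ, (Gker m lam x t * iSigma2 * Vmat p₁ p₂ q t).mulVec (χ n t)) :
    ∀ x ∈ Set.Icc (0 : ℝ) γ,
      Summable (fun n : ℕ => ‖χ n x‖) ∧
      ‖∑' n : ℕ, χ n x‖
        ≤ K2 m lam * Real.exp ((γ - x) * (|(qmom m lam).im| - (qmom m lam).im))
          * Real.exp (K1 m lam * ∫ t in x..γ, (|p₁ t| + |p₂ t| + 2 * |q t|)) := by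
  intro x hx
  have hk := kzero_ne_zero hm.le hlam
  have hK : 0 ≤ K1 m lam := zero_le_one.trans (one_le_K1 hk)
  set c := |(qmom m lam).im| - (qmom m lam).im
  set w : ℝ → ℝ := fun t => K1 m lam * (|p₁ t| + |p₂ t| + 2 * |q t|)
  have hw_Ici : IntegrableOn w (Ici 0) :=
    ((hp₁.abs.add hp₂.abs).add (hq.abs.const_mul 2)).const_mul _
  have hw : IntervalIntegrable w volume 0 γ :=
    (intervalIntegrable_iff_integrableOn_Ioc_of_le (hx.1.trans hx.2)).mpr
      (hw_Ici.mono_set (Ioc_subset_Icc_self.trans Icc_subset_Ici_self))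
  have hχ0_le : ∀ y ∈ Icc 0 γ, ‖χ 0 y‖ ≤ K2 m lam * Real.exp ((γ - y) * c) := fun y hy => by
    rw [hχ0]
    exact (norm_kzero_vec_le_K2 m lam).trans (le_mul_of_one_le_right
      (zero_le_one.trans (le_max_right _ _))
      (Real.one_le_exp (mul_nonneg (sub_nonneg.2 hy.2) (sub_nonneg.2 (le_abs_self _)))))
  have hχ_le := fun n => norm_le_exp_mul_pow_div_factorial_of_volterra hw
    (fun t _ => by positivity) hχ0_le (fun n y _ => hχs n y)
    (fun n y _ t ht => norm_Gker_mul_iSigma2_mul_Vmat_mulVec_le hk p₁ p₂ q ht.1.le (χ n t)) n x hx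
  refine ⟨summable_norm_of_norm_le_mul_pow_div_factorial hχ_le, ?_⟩
  simpa only [w, intervalIntegral.integral_const_mul] using
    norm_tsum_le_mul_exp_of_norm_le_mul_pow_div_factorial hχ_le

theorem stmt4 (m γ : ℝ) (hm : 0 < m) (hγ : 0 < γ) (p₁ p₂ q : ℝ → ℝ)
    (hp₁ : IntegrableOn p₁ (Set.Ici 0)) (hp₂ : IntegrableOn p₂ (Set.Ici 0))
    (hq : IntegrableOn q (Set.Ici 0))
    (hp₁0 : ∀ x > γ, p₁ x = 0) (hp₂0 : ∀ x > γ, p₂ x = 0) (hq0 : ∀ x > γ, q x = 0)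
    (lam : ℂ) (hlam : ∀ t : ℝ, t ∈ Set.Icc (-m) m → (t : ℂ) ≠ lam)
    (χ : ℕ → ℝ → Fin 2 → ℂ)
    (hχ0 : ∀ x : ℝ, χ 0 x = ![kzero m lam, 1])
    (hχs : ∀ n : ℕ, ∀ x : ℝ,
      χ (n + 1) x
        = ∫ t in x..γ, (Gker m lam x t * iSigma2 * Vmat p₁ p₂ q t).mulVec (χ n t)) :
    ∀ x ∈ Set.Icc (0 : ℝ) γ,
      Summable (fun n : ℕ => ‖χ n x‖) ∧
      ‖∑' n : ℕ, χ n x‖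
        ≤ K2 m lam * Real.exp ((γ - x) * (|(qmom m lam).im| - (qmom m lam).im))
          * Real.exp (K1 m lam * ∫ t in x..γ, (|p₁ t| + |p₂ t| + 2 * |q t|)) :=
  stmt4_general m γ hm p₁ p₂ q hp₁ hp₂ hq lam hlam χ hχ0 hχs
end

section
/- Let γ>0, p∈ℕ, and let G_p(z) = z + d₀ + Σ_{n=1}^{p} d_n z^{−n} with complex coefficients d₀,…,d_p. Let f : ℂ → ℂ be entire and assume: (a) there are constants A, C₀ > 0 with |f(z)| ≤ C₀·e^{A|z|} for all z∈ℂ; (b) limsup_{y→+∞} (log|f(−iy)|)/y ≤ 2γ; (c) C_p := sup_{x∈ℝ, x≠0} |x^{p+1}·(f(x) − G_p(x))| < ∞. Then every zero z of f with Im z ≤ 0 and z ≠ 0 satisfies |z^{p+1}·G_p(z)| ≤ C_p·e^{−2γ·Im z}. -/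
/-!
Clearing denominators, `z ^ (p + 1) * G_p z = Q z` for a polynomial `Q`, so
`h z = z ^ (p + 1) * f z - Q z` is entire, of exponential type, bounded by `C_p` on `ℝ`, and of
type at most `2γ` along the ray `-i ℝ₊` (the polynomial part has type `0`). For `c > 2γ` the
Phragmén–Lindelöf principle in the right half-plane, applied to `exp (-c w) • h (-i w)`, gives
`‖h z‖ ≤ C_p e^{-c Im z}` on the lower half-plane; let `c ↓ 2γ`. At a zero `z` of `f`,
`h z = -z ^ (p + 1) * G_p z`.
-/

open Filter Complex Topology Asymptotics Bornology Polynomial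

noncomputable def laurentNumerator {K : Type*} [Field K] (p : ℕ) (d : ℕ → K) : K[X] :=
  X ^ (p + 2) + C (d 0) * X ^ (p + 1) + ∑ n ∈ Finset.Icc 1 p, C (d n) * X ^ (p + 1 - n)

lemma eval_laurentNumerator {K : Type*} [Field K] (p : ℕ) (d : ℕ → K) {z : K} (hz : z ≠ 0) :
    (laurentNumerator p d).eval z =
      z ^ (p + 1) * (z + d 0 + ∑ n ∈ Finset.Icc 1 p, d n * z ^ (-(n : ℤ))) := by
  simp only [laurentNumerator, eval_add, eval_mul, eval_pow, eval_X, eval_C, eval_finsetSum,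
    mul_add, Finset.mul_sum]
  congr 1
  · ring
  · refine Finset.sum_congr rfl fun n hn => ?_
    have hnp : n ≤ p + 1 := by linarith [(Finset.mem_Icc.1 hn).2]
    rw [mul_left_comm, ← zpow_natCast z (p + 1), ← zpow_add₀ hz, ← zpow_natCast z (p + 1 - n),
      Nat.cast_sub hnp]
    ring_nf

section Growth

variable {R : Type*} [NormedRing R] [NormMulClass R] [NormOneClass R] {ε : ℝ}

lemma isBigO_pow_exp_mul_norm_cobounded (n : ℕ) (hε : 0 < ε) :
    (fun z : R => z ^ n) =O[cobounded R] fun z => Real.exp (ε * ‖z‖) := by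
  have hnorm := (isLittleO_pow_exp_pos_mul_atTop n hε).isBigO.comp_tendsto
    (tendsto_norm_cobounded_atTop (E := R))
  exact (isBigO_norm_left (f' := fun z : R => z ^ n)).1 <| by
    simpa only [Function.comp_def, norm_pow] using hnorm

lemma Polynomial.isBigO_exp_mul_norm_cobounded (P : R[X]) (hε : 0 < ε) :
    P.eval =O[cobounded R] fun z => Real.exp (ε * ‖z‖) :=
  isEquivalent_cobounded_leading_monomial.isBigO.trans <|
    (isBigO_pow_exp_mul_norm_cobounded _ hε).const_mul_left _

end Growth

lemma tendsto_neg_I_mul_cobounded :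
    Tendsto (fun w : ℂ => -I * w) (cobounded ℂ) (cobounded ℂ) := by
  simpa [← tendsto_norm_atTop_iff_cobounded] using tendsto_norm_cobounded_atTop

lemma tendsto_neg_I_mul_ofReal_atTop : Tendsto (fun y : ℝ => -I * y) atTop (cobounded ℂ) := by
  simpa [← tendsto_norm_atTop_iff_cobounded] using tendsto_abs_atTop_atTop

lemma Asymptotics.IsBigO.comp_neg_I_mul_ofReal {E : Type*} [Norm E] {g : ℂ → E} {c : ℝ}
    (hg : g =O[cobounded ℂ] fun z => Real.exp (c * ‖z‖)) :
    (fun y : ℝ => g (-I * y)) =O[atTop] fun y => Real.exp (c * y) := by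
  refine (hg.comp_tendsto tendsto_neg_I_mul_ofReal_atTop).congr' .rfl ?_
  filter_upwards [eventually_ge_atTop 0] with y hy
  simp [abs_of_nonneg hy]

lemma norm_le_of_forall_ne_zero {E : Type*} [SeminormedAddCommGroup E] {g : ℝ → E} {C : ℝ}
    (hg : Continuous g) (h : ∀ x ≠ 0, ‖g x‖ ≤ C) (x : ℝ) : ‖g x‖ ≤ C :=
  (isClosed_le hg.norm continuous_const).closure_subset_iff.2 h <|
    (dense_compl_singleton (0 : ℝ)).closure_eq ▸ Set.mem_univ x

lemma isBoundedUnder_log_norm_div_of_isBigO_exp {E : Type*} [SeminormedAddGroup E] {g : ℝ → E}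
    {A : ℝ}
    (hg : g =O[atTop] fun y => Real.exp (A * y)) :
    IsBoundedUnder (· ≤ ·) atTop fun y => Real.log ‖g y‖ / y := by
  obtain ⟨K, hK, hgK⟩ := hg.exists_pos
  refine isBoundedUnder_of_eventually_le (a := |Real.log K| + |A|) ?_
  filter_upwards [hgK.bound, eventually_ge_atTop 1] with y hy hy1
  rw [Real.norm_of_nonneg (Real.exp_pos _).le] at hy
  rw [div_le_iff₀ (by linarith)]
  rcases (norm_nonneg (g y)).eq_or_lt with hy0 | hy0
  · rw [← hy0, Real.log_zero]
    positivity
  · have hlog : Real.log ‖g y‖ ≤ Real.log K + A * y := by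
      rw [← Real.log_exp (A * y), ← Real.log_mul hK.ne' (Real.exp_pos _).ne']
      exact Real.log_le_log hy0 hy
    nlinarith [le_abs_self (Real.log K), le_abs_self A, abs_nonneg (Real.log K), abs_nonneg A]

lemma isBigO_exp_of_limsup_log_norm_div_lt {E : Type*} [SeminormedAddGroup E] {g : ℝ → E}
    {A c : ℝ}
    (hg : g =O[atTop] fun y => Real.exp (A * y))
    (hlim : limsup (fun y => Real.log ‖g y‖ / y) atTop < c) :
    g =O[atTop] fun y => Real.exp (c * y) := by
  refine .of_bound' ?_
  filter_upwards [eventually_lt_of_limsup_lt hlim (isBoundedUnder_log_norm_div_of_isBigO_exp hg),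
    eventually_gt_atTop 0] with y hy hy0
  rw [Real.norm_of_nonneg (Real.exp_pos _).le]
  rcases (norm_nonneg (g y)).eq_or_lt with hg0 | hg0
  · exact hg0 ▸ (Real.exp_pos _).le
  · rw [div_lt_iff₀ hy0] at hy
    exact (Real.log_le_iff_le_exp hg0).1 hy.le

namespace PhragmenLindelof

variable {E : Type*} [NormedAddCommGroup E] [NormedSpace ℂ E] {h : ℂ → E} {B C : ℝ}

theorem lower_half_plane_of_isBigO_on_ray {c : ℝ} (hd : Differentiable ℂ h)
    (hexp : h =O[cobounded ℂ] fun z => Real.exp (B * ‖z‖)) (hre : ∀ x : ℝ, ‖h x‖ ≤ C)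
    (hray : (fun y : ℝ => h (-I * y)) =O[atTop] fun y => Real.exp (c * y)) {z : ℂ}
    (hz : z.im ≤ 0) : ‖h z‖ ≤ C * Real.exp (-c * z.im) := by
  -- `w ↦ -I * w` maps the right half-plane onto the lower one; the factor `exp (-c w)` makes
  -- the rotated function bounded on the positive real axis.
  set F : ℂ → E := fun w => exp ((-c : ℝ) * w) • h (-I * w)
  have hF : ∀ w, ‖F w‖ = Real.exp (-c * w.re) * ‖h (-I * w)‖ := fun w => by
    rw [norm_smul, norm_exp, re_ofReal_mul]
  have hF_diff : DiffContOnCl ℂ F {w | 0 < w.re} :=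
    ((differentiable_id.const_mul _).cexp.smul
      (hd.comp (differentiable_id.const_mul _))).diffContOnCl
  have hF_exp : F =O[cobounded ℂ] fun w => Real.exp ((|c| + B) * ‖w‖ ^ (1 : ℝ)) := by
    have hexp_rot : (fun w => h (-I * w)) =O[cobounded ℂ] fun w => Real.exp (B * ‖w‖) := by
      simpa [Function.comp_def] using hexp.comp_tendsto tendsto_neg_I_mul_cobounded
    have hexp_lin : (fun w : ℂ => exp ((-c : ℝ) * w)) =O[cobounded ℂ]
        fun w => Real.exp (|c| * ‖w‖) := by
      refine .of_bound 1 (.of_forall fun w => ?_)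
      rw [norm_exp, re_ofReal_mul, Real.norm_of_nonneg (Real.exp_pos _).le, one_mul,
        Real.exp_le_exp]
      refine (le_abs_self _).trans ?_
      rw [abs_mul, abs_neg]
      exact mul_le_mul_of_nonneg_left (abs_re_le_norm w) (abs_nonneg c)
    refine (hexp_lin.smul hexp_rot).congr_right fun w => ?_
    rw [Real.rpow_one, smul_eq_mul, ← Real.exp_add, add_mul]
  have hF_ray : IsBoundedUnder (· ≤ ·) atTop fun x : ℝ => ‖F x‖ := by
    obtain ⟨K, hK⟩ := hray.bound
    refine isBoundedUnder_of_eventually_le (a := K) (hK.mono fun y hy => ?_)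
    rw [Real.norm_of_nonneg (Real.exp_pos _).le] at hy
    rw [hF, ofReal_re]
    calc Real.exp (-c * y) * ‖h (-I * y)‖ ≤ Real.exp (-c * y) * (K * Real.exp (c * y)) := by
          gcongr
      _ = K := by rw [mul_left_comm, ← Real.exp_add]; simp
  have hrot : ∀ w, -I * (I * w) = w := fun w => by rw [neg_mul, ← mul_assoc, I_mul_I]; simp
  have hF_im : ∀ x : ℝ, ‖F (x * I)‖ ≤ C := fun x => by
    simpa [hF, mul_comm _ I, hrot] using hre x
  have hPL := right_half_plane_of_bounded_on_real hF_diff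
    ⟨1, one_lt_two, _, hF_exp.mono inf_le_left⟩ hF_ray hF_im (z := I * z) (by simpa using hz)
  rw [hF, hrot, mul_re, I_re, I_im] at hPL
  rw [neg_mul, Real.exp_neg, ← div_eq_mul_inv, le_div_iff₀ (Real.exp_pos _), mul_comm]
  simpa using hPL

theorem lower_half_plane_of_type_le {τ : ℝ} (hd : Differentiable ℂ h)
    (hexp : h =O[cobounded ℂ] fun z => Real.exp (B * ‖z‖)) (hre : ∀ x : ℝ, ‖h x‖ ≤ C)
    (htype : ∀ c > τ, (fun y : ℝ => h (-I * y)) =O[atTop] fun y => Real.exp (c * y)) {z : ℂ}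
    (hz : z.im ≤ 0) : ‖h z‖ ≤ C * Real.exp (-τ * z.im) := by
  have hlim : Tendsto (fun c => C * Real.exp (-c * z.im)) (𝓝[>] τ)
      (𝓝 (C * Real.exp (-τ * z.im))) :=
    (Continuous.tendsto (by fun_prop) τ).mono_left nhdsWithin_le_nhds
  exact ge_of_tendsto hlim <| eventually_nhdsWithin_of_forall fun c hc =>
    lower_half_plane_of_isBigO_on_ray hd hexp hre (htype c hc) hz

end PhragmenLindelof

lemma isBigO_pow_mul_sub_eval_cobounded {R : Type*} [NormedRing R] [NormMulClass R]
    [NormOneClass R] {f : R → R} {A : ℝ} (hA : 0 < A)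
    (hf : f =O[cobounded R] fun z => Real.exp (A * ‖z‖)) (k : ℕ) (P : R[X]) :
    (fun z => z ^ k * f z - P.eval z) =O[cobounded R] fun z => Real.exp ((1 + A) * ‖z‖) := by
  refine IsBigO.sub ?_ (P.isBigO_exp_mul_norm_cobounded (by linarith))
  refine ((isBigO_pow_exp_mul_norm_cobounded k one_pos).mul hf).congr_right fun z => ?_
  rw [← Real.exp_add, add_mul]

lemma isBigO_pow_mul_sub_eval_neg_I_mul {f : ℂ → ℂ} {τ : ℝ} (hτ : 0 ≤ τ)
    (hf : ∀ c > τ, (fun y : ℝ => f (-I * y)) =O[atTop] fun y => Real.exp (c * y))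
    (k : ℕ) (P : ℂ[X]) {c : ℝ} (hc : τ < c) :
    (fun y : ℝ => (-I * y) ^ k * f (-I * y) - P.eval (-I * y)) =O[atTop]
      fun y => Real.exp (c * y) := by
  refine IsBigO.sub ?_ (P.isBigO_exp_mul_norm_cobounded (by linarith)).comp_neg_I_mul_ofReal
  have hpow := (isBigO_pow_exp_mul_norm_cobounded (R := ℂ) k
    (sub_pos.2 (add_div_two_lt_right.2 hc))).comp_neg_I_mul_ofReal
  refine (hpow.mul (hf _ (left_lt_add_div_two.2 hc))).congr_right fun y => ?_
  rw [← Real.exp_add, ← add_mul, sub_add_cancel]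

theorem stmt6_general (γ : ℝ) (hγ : 0 < γ) (p : ℕ) (d : ℕ → ℂ) (f : ℂ → ℂ)
    (hf : Differentiable ℂ f)
    (A C₀ : ℝ) (hA : 0 < A)
    (hbd : ∀ z : ℂ, ‖f z‖ ≤ C₀ * Real.exp (A * ‖z‖))
    (htype : Filter.limsup
        (fun y : ℝ => Real.log ‖f (-Complex.I * (y : ℂ))‖ / y) Filter.atTop
      ≤ 2 * γ)
    (Cp : ℝ)
    (hCp : ∀ x : ℝ, x ≠ 0 →
      ‖(x : ℂ) ^ (p + 1)
          * (f x - ((x : ℂ) + d 0 + ∑ n ∈ Finset.Icc 1 p, d n * (x : ℂ) ^ (-(n : ℤ))))‖ ≤ Cp) :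
    ∀ z : ℂ, f z = 0 → z.im ≤ 0 → z ≠ 0 →
      ‖z ^ (p + 1) * (z + d 0 + ∑ n ∈ Finset.Icc 1 p, d n * z ^ (-(n : ℤ)))‖
        ≤ Cp * Real.exp (-2 * γ * z.im) := by
  intro z hfz hzim hz0
  set Q := laurentNumerator p d
  have hf_exp : f =O[cobounded ℂ] fun u => Real.exp (A * ‖u‖) :=
    .of_bound C₀ <| .of_forall fun u => by
      rw [Real.norm_of_nonneg (Real.exp_pos _).le]; exact hbd u
  have hf_ray : ∀ c > 2 * γ, (fun y : ℝ => f (-I * y)) =O[atTop] fun y => Real.exp (c * y) :=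
    fun c hc => isBigO_exp_of_limsup_log_norm_div_lt hf_exp.comp_neg_I_mul_ofReal
      (htype.trans_lt hc)
  have hre : ∀ x : ℝ, ‖(x : ℂ) ^ (p + 1) * f x - Q.eval (x : ℂ)‖ ≤ Cp := by
    have hfc := hf.continuous
    refine norm_le_of_forall_ne_zero (by fun_prop) fun x hx => ?_
    rw [eval_laurentNumerator p d (ofReal_ne_zero.2 hx), ← mul_sub]
    exact hCp x hx
  have key := PhragmenLindelof.lower_half_plane_of_type_le
    (h := fun u => u ^ (p + 1) * f u - Q.eval u)
    (((differentiable_pow _).mul hf).sub Q.differentiable)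
    (isBigO_pow_mul_sub_eval_cobounded hA hf_exp _ Q) hre
    (fun c => isBigO_pow_mul_sub_eval_neg_I_mul (by positivity) hf_ray _ Q) hzim
  rw [hfz, mul_zero, zero_sub, norm_neg, eval_laurentNumerator p d hz0] at key
  simpa [neg_mul, mul_assoc] using key

theorem stmt6 (γ : ℝ) (hγ : 0 < γ) (p : ℕ) (d : ℕ → ℂ) (f : ℂ → ℂ)
    (hf : Differentiable ℂ f)
    (A C₀ : ℝ) (hA : 0 < A) (hC₀ : 0 < C₀)
    (hbd : ∀ z : ℂ, ‖f z‖ ≤ C₀ * Real.exp (A * ‖z‖))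
    (htype : Filter.limsup
        (fun y : ℝ => Real.log ‖f (-Complex.I * (y : ℂ))‖ / y) Filter.atTop
      ≤ 2 * γ)
    (Cp : ℝ)
    (hCp : ∀ x : ℝ, x ≠ 0 →
      ‖(x : ℂ) ^ (p + 1)
          * (f x - ((x : ℂ) + d 0 + ∑ n ∈ Finset.Icc 1 p, d n * (x : ℂ) ^ (-(n : ℤ))))‖ ≤ Cp) :
    ∀ z : ℂ, f z = 0 → z.im ≤ 0 → z ≠ 0 →
      ‖z ^ (p + 1) * (z + d 0 + ∑ n ∈ Finset.Icc 1 p, d n * z ^ (-(n : ℤ)))‖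
        ≤ Cp * Real.exp (-2 * γ * z.im) :=
  stmt6_general γ hγ p d f hf A C₀ hA hbd htype Cp hCp
end

section
/- Let γ>0 and d₀∈ℂ. Let f : ℂ → ℂ be entire and assume: (a) there are constants A, C > 0 with |f(z)| ≤ C·e^{A|z|} for all z∈ℂ; (b) limsup_{y→+∞} (log|f(−iy)|)/y ≤ 2γ; (c) C₀ := sup_{x∈ℝ, x≠0} |x·(f(x) − x − d₀)| < ∞. Then every zero z of f with Im z ≤ 0 and z ≠ 0 satisfies |z·(z + d₀)| ≤ C₀·e^{−2γ·Im z}. -/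
/-! For `σ > 2γ` the entire function `G w = w (f w - w - d₀) e^{-iσw}` is of exponential type,
is bounded by `C₀` on `ℝ` and tends to `0` along the negative imaginary axis (`f` has type at most
`2γ < σ` in that direction). By Phragmén–Lindelöf, `‖G‖ ≤ C₀` on the closed lower half-plane.
At a zero `z` of `f`, `‖G z‖ = ‖z (z + d₀)‖ e^{σ Im z}`; now let `σ ↓ 2γ`. -/

open Filter Complex Asymptotics Topology

def IsExpType {E : Type*} [NormedAddCommGroup E] (g : ℂ → E) : Prop :=
  ∃ M B : ℝ, ∀ w, ‖g w‖ ≤ M * Real.exp (B * ‖w‖)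

namespace IsExpType

variable {E : Type*} [NormedAddCommGroup E]

lemma const (c : E) : IsExpType fun _ : ℂ => c :=
  ⟨‖c‖, 0, fun w => by simp⟩

lemma id : IsExpType fun w : ℂ => w :=
  ⟨1, 1, fun w => by
    simpa using (le_add_of_nonneg_right zero_le_one).trans (Real.add_one_le_exp ‖w‖)⟩

lemma cexp_mul (c : ℂ) : IsExpType fun w => cexp (c * w) :=
  ⟨1, ‖c‖, fun w => by
    rw [norm_exp, one_mul, Real.exp_le_exp, ← norm_mul]
    exact re_le_norm _⟩

lemma sub {g h : ℂ → E} (hg : IsExpType g) (hh : IsExpType h) : IsExpType (g - h) := by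
  obtain ⟨M, B, hgb⟩ := hg
  obtain ⟨N, D, hhb⟩ := hh
  refine ⟨M + N, max B D, fun w => ?_⟩
  have hM : 0 ≤ M := nonneg_of_mul_nonneg_left ((norm_nonneg _).trans (hgb 0)) (Real.exp_pos _)
  have hN : 0 ≤ N := nonneg_of_mul_nonneg_left ((norm_nonneg _).trans (hhb 0)) (Real.exp_pos _)
  have hB : Real.exp (B * ‖w‖) ≤ Real.exp (max B D * ‖w‖) := by
    gcongr; exact le_max_left _ _
  have hD : Real.exp (D * ‖w‖) ≤ Real.exp (max B D * ‖w‖) := by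
    gcongr; exact le_max_right _ _
  calc ‖(g - h) w‖ ≤ ‖g w‖ + ‖h w‖ := norm_sub_le _ _
    _ ≤ M * Real.exp (B * ‖w‖) + N * Real.exp (D * ‖w‖) := add_le_add (hgb w) (hhb w)
    _ ≤ (M + N) * Real.exp (max B D * ‖w‖) := by nlinarith

lemma mul {R : Type*} [NormedRing R] {g h : ℂ → R} (hg : IsExpType g) (hh : IsExpType h) :
    IsExpType (g * h) := by
  obtain ⟨M, B, hgb⟩ := hg
  obtain ⟨N, D, hhb⟩ := hh
  refine ⟨M * N, B + D, fun w => ?_⟩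
  calc ‖(g * h) w‖ ≤ ‖g w‖ * ‖h w‖ := norm_mul_le _ _
    _ ≤ M * Real.exp (B * ‖w‖) * (N * Real.exp (D * ‖w‖)) :=
      mul_le_mul (hgb w) (hhb w) (norm_nonneg _) ((norm_nonneg _).trans (hgb w))
    _ = M * N * Real.exp ((B + D) * ‖w‖) := by rw [add_mul, Real.exp_add]; ring

theorem lower_half_plane_of_bounded_on_real {g : ℂ → E} [NormedSpace ℂ E] (hd : Differentiable ℂ g)
    (hg : IsExpType g) {C : ℝ} (hreal : ∀ x : ℝ, ‖g x‖ ≤ C)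
    (him : IsBoundedUnder (· ≤ ·) atTop fun y : ℝ => ‖g (-I * y)‖) {w : ℂ} (hw : w.im ≤ 0) :
    ‖g w‖ ≤ C := by
  obtain ⟨M, B, hgb⟩ := hg
  have hrot := PhragmenLindelof.right_half_plane_of_bounded_on_real (f := fun ζ => g (-I * ζ))
    (hd.comp (by fun_prop)).diffContOnCl
    ⟨1, one_lt_two, B, IsBigO.of_bound M (Eventually.of_forall fun ζ => by
      simpa [Real.norm_eq_abs, abs_of_pos (Real.exp_pos _)] using hgb (-I * ζ))⟩
    him (fun x => by simpa [mul_comm, ← mul_assoc] using hreal x) (z := I * w) (by simpa using hw)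
  simpa [← mul_assoc] using hrot

end IsExpType

section

variable {E : Type*} [NormedAddCommGroup E]

/- In `ℝ` the `limsup` of a function that is not eventually bounded above is a junk value, so a
bound on it says nothing until this is known. -/
lemma isBoundedUnder_log_norm_div {v : ℝ → E} {M B : ℝ}
    (hv : ∀ᶠ y in atTop, ‖v y‖ ≤ M * Real.exp (B * y)) :
    IsBoundedUnder (· ≤ ·) atTop fun y => Real.log ‖v y‖ / y := by
  refine isBoundedUnder_of_eventually_le (a := |Real.log M| + |B|) ?_
  filter_upwards [hv, eventually_ge_atTop 1] with y hvy hy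
  have hy0 : 0 < y := one_pos.trans_le hy
  rcases (norm_nonneg (v y)).eq_or_lt with h0 | hpos
  · rw [← h0, Real.log_zero, zero_div]; positivity
  · have hM : 0 < M := pos_of_mul_pos_left (hpos.trans_le hvy) (Real.exp_pos _).le
    have hlog : Real.log ‖v y‖ ≤ Real.log M + B * y := by
      rw [← Real.log_exp (B * y), ← Real.log_mul hM.ne' (Real.exp_pos _).ne']
      exact Real.log_le_log hpos hvy
    have hM' : Real.log M / y ≤ |Real.log M| :=
      div_le_of_le_mul₀ hy0.le (abs_nonneg _) (by
        nlinarith [le_abs_self (Real.log M), mul_le_mul_of_nonneg_left hy (abs_nonneg (Real.log M))])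
    calc Real.log ‖v y‖ / y ≤ (Real.log M + B * y) / y := by gcongr
      _ = Real.log M / y + B := by field_simp
      _ ≤ |Real.log M| + |B| := add_le_add hM' (le_abs_self B)

lemma eventually_norm_le_exp_of_limsup_log_div_le {v : ℝ → E} {M B τ τ' : ℝ}
    (hv : ∀ᶠ y in atTop, ‖v y‖ ≤ M * Real.exp (B * y))
    (hlim : limsup (fun y => Real.log ‖v y‖ / y) atTop ≤ τ) (hτ : τ < τ') :
    ∀ᶠ y in atTop, ‖v y‖ ≤ Real.exp (τ' * y) := by
  filter_upwards [eventually_lt_of_limsup_lt (hlim.trans_lt hτ) (isBoundedUnder_log_norm_div hv),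
    eventually_gt_atTop 0] with y hlt hy
  rcases (norm_nonneg (v y)).eq_or_lt with h0 | hpos
  · rw [← h0]; exact (Real.exp_pos _).le
  · rw [← Real.log_le_iff_le_exp hpos]
    exact ((div_lt_iff₀ hy).mp hlt).le

end

lemma tendsto_mul_exp_add_mul_exp_neg_mul {τ σ : ℝ} (hτσ : τ < σ) (hσ : 0 < σ) (D : ℝ) :
    Tendsto (fun y => y * (Real.exp (τ * y) + y + D) * Real.exp (-σ * y)) atTop (𝓝 0) := by
  have h1 := tendsto_rpow_mul_exp_neg_mul_atTop_nhds_zero 1 (σ - τ) (sub_pos.mpr hτσ)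
  have h2 := tendsto_rpow_mul_exp_neg_mul_atTop_nhds_zero 2 σ hσ
  have h3 := (tendsto_rpow_mul_exp_neg_mul_atTop_nhds_zero 1 σ hσ).const_mul D
  have h := (h1.add h2).add h3
  simp only [mul_zero, add_zero] at h
  refine h.congr fun y => ?_
  rw [Real.rpow_one, Real.rpow_two, show -(σ - τ) * y = τ * y + -σ * y by ring, Real.exp_add]
  ring

theorem norm_mul_add_le_of_limsup_log_div_lt {f : ℂ → ℂ} (hf : Differentiable ℂ f)
    (hexp : IsExpType f) {d₀ : ℂ} {C₀ τ σ : ℝ}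
    (hτ : limsup (fun y : ℝ => Real.log ‖f (-I * y)‖ / y) atTop ≤ τ) (hτσ : τ < σ) (hσ : 0 < σ)
    (hC₀ : ∀ x : ℝ, x ≠ 0 → ‖(x : ℂ) * (f x - x - d₀)‖ ≤ C₀) {z : ℂ} (hz : f z = 0)
    (hzim : z.im ≤ 0) :
    ‖z * (z + d₀)‖ ≤ C₀ * Real.exp (-σ * z.im) := by
  set G : ℂ → ℂ := fun w => w * (f w - w - d₀) * cexp (-I * σ * w)
  have hnorm (w : ℂ) : ‖G w‖ = ‖w‖ * ‖f w - w - d₀‖ * Real.exp (σ * w.im) := by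
    simp [G, norm_exp]
  have hGd : Differentiable ℂ G := by fun_prop
  have hGexp : IsExpType G :=
    (IsExpType.id.mul ((hexp.sub .id).sub (.const d₀))).mul (.cexp_mul _)
  have hreal (x : ℝ) : ‖G x‖ ≤ C₀ := by
    rcases eq_or_ne x 0 with rfl | hx
    · simpa [G] using (norm_nonneg _).trans (hC₀ 1 one_ne_zero)
    · simpa [hnorm] using hC₀ x hx
  have him : IsBoundedUnder (· ≤ ·) atTop fun y : ℝ => ‖G (-I * y)‖ := by
    obtain ⟨M, B, hMB⟩ := hexp
    have hf_bd : ∀ᶠ y : ℝ in atTop, ‖f (-I * y)‖ ≤ M * Real.exp (B * y) :=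
      (eventually_ge_atTop 0).mono fun y hy => by simpa [abs_of_nonneg hy] using hMB (-I * y)
    have hf_le := eventually_norm_le_exp_of_limsup_log_div_le hf_bd hτ
      (left_lt_add_div_two.mpr hτσ)
    refine (tendsto_mul_exp_add_mul_exp_neg_mul (add_div_two_lt_right.mpr hτσ) hσ
      ‖d₀‖).isBoundedUnder_le.mono_le ?_
    filter_upwards [hf_le, eventually_ge_atTop 0] with y hfy hy
    have hIy : ‖-I * (y : ℂ)‖ = y := by simp [abs_of_nonneg hy]
    rw [hnorm, hIy, show (-I * (y : ℂ)).im = -y by simp, mul_neg, ← neg_mul]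
    gcongr
    calc ‖f (-I * y) - -I * y - d₀‖ ≤ ‖f (-I * y)‖ + ‖-I * (y : ℂ)‖ + ‖d₀‖ :=
          (norm_sub_le _ _).trans (by gcongr; exact norm_sub_le _ _)
      _ ≤ Real.exp ((τ + σ) / 2 * y) + y + ‖d₀‖ := by rw [hIy]; gcongr
  have hGz := hGexp.lower_half_plane_of_bounded_on_real hGd hreal him hzim
  rw [hnorm, hz, zero_sub, sub_eq_add_neg, ← neg_add, norm_neg, ← norm_mul] at hGz
  rwa [neg_mul, Real.exp_neg, ← div_eq_mul_inv, le_div_iff₀ (Real.exp_pos _)]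

theorem stmt7_general (γ : ℝ) (hγ : 0 < γ) (d₀ : ℂ) (f : ℂ → ℂ)
    (hf : Differentiable ℂ f)
    (A C : ℝ)
    (hbd : ∀ z : ℂ, ‖f z‖ ≤ C * Real.exp (A * ‖z‖))
    (htype : Filter.limsup
        (fun y : ℝ => Real.log (‖f (-Complex.I * (y : ℂ))‖) / y) Filter.atTop
      ≤ 2 * γ)
    (C₀ : ℝ)
    (hC₀ : ∀ x : ℝ, x ≠ 0 → ‖(x : ℂ) * (f x - (x : ℂ) - d₀)‖ ≤ C₀) :
    ∀ z : ℂ, f z = 0 → z.im ≤ 0 → z ≠ 0 →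
      ‖z * (z + d₀)‖ ≤ C₀ * Real.exp (-2 * γ * z.im) := by
  intro z hz hzim _
  have hlim : Tendsto (fun σ => C₀ * Real.exp (-σ * z.im)) (𝓝[>] (2 * γ))
      (𝓝 (C₀ * Real.exp (-2 * γ * z.im))) := by
    have hcont : Continuous fun σ : ℝ => C₀ * Real.exp (-σ * z.im) := by fun_prop
    simpa only [neg_mul] using (hcont.tendsto (2 * γ)).mono_left nhdsWithin_le_nhds
  refine ge_of_tendsto hlim ?_
  filter_upwards [self_mem_nhdsWithin] with σ (hσ : 2 * γ < σ)
  exact norm_mul_add_le_of_limsup_log_div_lt hf ⟨C, A, hbd⟩ htype hσ (by linarith) hC₀ hz hzim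

theorem stmt7 (γ : ℝ) (hγ : 0 < γ) (d₀ : ℂ) (f : ℂ → ℂ)
    (hf : Differentiable ℂ f)
    (A C : ℝ) (hA : 0 < A) (hC : 0 < C)
    (hbd : ∀ z : ℂ, ‖f z‖ ≤ C * Real.exp (A * ‖z‖))
    (htype : Filter.limsup
        (fun y : ℝ => Real.log (‖f (-Complex.I * (y : ℂ))‖) / y) Filter.atTop
      ≤ 2 * γ)
    (C₀ : ℝ)
    (hC₀ : ∀ x : ℝ, x ≠ 0 → ‖(x : ℂ) * (f x - (x : ℂ) - d₀)‖ ≤ C₀) :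
    ∀ z : ℂ, f z = 0 → z.im ≤ 0 → z ≠ 0 →
      ‖z * (z + d₀)‖ ≤ C₀ * Real.exp (-2 * γ * z.im) :=
  stmt7_general γ hγ d₀ f hf A C hbd htype C₀ hC₀
end

section
/- Let γ>0 and d₀, d₁ ∈ ℂ. Let f : ℂ → ℂ be entire and assume: (a) there are constants A, C > 0 with |f(z)| ≤ C·e^{A|z|} for all z∈ℂ; (b) limsup_{y→+∞} (log|f(−iy)|)/y ≤ 2γ; (c) C₁ := sup_{x∈ℝ, x≠0} |x²·(f(x) − x − d₀ − d₁·x^{−1})| < ∞. Then every zero z of f with Im z ≤ 0 and z ≠ 0 satisfies |z·(z² + d₀·z + d₁)| ≤ C₁·e^{−2γ·Im z}. -/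
/-!
Put `g(w) = w²f(w) - w³ - d₀w² - d₁w`, the entire function equal to `w²(f(w) - w - d₀ - d₁/w)`
off `0`. It has exponential type, is bounded by `C₁` on `ℝ`, and is `O(e^{cy})` at `-iy` for every
`c > 2γ`, because the polynomial terms are absorbed once `c > 0`. Phragmén–Lindelöf applied to
`g(z)e^{-icz}` in the lower half-plane then gives `|g(z)| ≤ C₁e^{-c Im z}`; let `c ↓ 2γ`.
At a zero of `f`, `g(z) = -z(z² + d₀z + d₁)`.
-/

open Filter Topology Asymptotics Bornology
open Complex (I)

def scaledRemainder (f : ℂ → ℂ) (d₀ d₁ : ℂ) (w : ℂ) : ℂ :=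
  w ^ 2 * f w - w ^ 3 - d₀ * w ^ 2 - d₁ * w

section scaledRemainder

variable {f : ℂ → ℂ} {d₀ d₁ : ℂ}

theorem Differentiable.scaledRemainder (hf : Differentiable ℂ f) :
    Differentiable ℂ (scaledRemainder f d₀ d₁) := by
  unfold _root_.scaledRemainder
  fun_prop

theorem scaledRemainder_of_eq_zero {z : ℂ} (hz : f z = 0) :
    scaledRemainder f d₀ d₁ z = -(z * (z ^ 2 + d₀ * z + d₁)) := by
  simp only [scaledRemainder, hz]
  ring

theorem norm_scaledRemainder_ofReal_le {C₁ : ℝ}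
    (h : ∀ x : ℝ, x ≠ 0 → ‖(x : ℂ) ^ 2 * (f x - x - d₀ - d₁ * (x : ℂ)⁻¹)‖ ≤ C₁) (x : ℝ) :
    ‖scaledRemainder f d₀ d₁ x‖ ≤ C₁ := by
  rcases eq_or_ne x 0 with rfl | hx
  · simpa [scaledRemainder] using (norm_nonneg _).trans (h 1 one_ne_zero)
  · have hx' : (x : ℂ) ≠ 0 := by exact_mod_cast hx
    convert h x hx using 2
    simp only [scaledRemainder]
    field_simp

theorem isLittleO_pow_exp_mul_of_norm_eq {α : Type*} {l : Filter α} {k : α → ℂ} {r : α → ℝ}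
    (hkr : ∀ᶠ a in l, ‖k a‖ = r a) (hr : Tendsto r l atTop) (n : ℕ) {b : ℝ} (hb : 0 < b) :
    (fun a => k a ^ n) =o[l] fun a => Real.exp (b * r a) := by
  refine IsBigO.trans_isLittleO (IsBigO.of_bound 1 ?_)
    ((isLittleO_pow_exp_pos_mul_atTop n hb).comp_tendsto hr)
  filter_upwards [hkr] with a ha
  rw [one_mul, Function.comp_apply, norm_pow, norm_pow, ← ha, norm_norm]

theorem isBigO_scaledRemainder_comp {α : Type*} {l : Filter α} {k : α → ℂ} {r : α → ℝ}
    (hkr : ∀ᶠ a in l, ‖k a‖ = r a) (hr : Tendsto r l atTop) {b c : ℝ}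
    (hf : (fun a => f (k a)) =O[l] fun a => Real.exp (b * r a)) (hbc : b < c) (hc : 0 < c) :
    (fun a => scaledRemainder f d₀ d₁ (k a)) =O[l] fun a => Real.exp (c * r a) := by
  have hpow (n : ℕ) {δ : ℝ} (hδ : 0 < δ) := isLittleO_pow_exp_mul_of_norm_eq hkr hr n hδ
  have hlead : (fun a => k a ^ 2 * f (k a)) =O[l] fun a => Real.exp (c * r a) := by
    refine ((hpow 2 (sub_pos.2 hbc)).isBigO.mul hf).congr_right fun a => ?_
    rw [← Real.exp_add]
    ring_nf
  have hlin : (fun a => d₁ * k a) =O[l] fun a => Real.exp (c * r a) := by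
    simpa using (hpow 1 hc).isBigO.const_mul_left d₁
  exact ((hlead.sub (hpow 3 hc).isBigO).sub ((hpow 2 hc).isBigO.const_mul_left d₀)).sub hlin

end scaledRemainder

theorem norm_le_mul_exp_of_bounded_on_real {g : ℂ → ℂ} (hg : Differentiable ℂ g) {B : ℝ}
    (hexp : g =O[cobounded ℂ] fun w => Real.exp (B * ‖w‖)) {M c : ℝ}
    (hreal : ∀ x : ℝ, ‖g x‖ ≤ M)
    (haxis : (fun y : ℝ => g (-I * y)) =O[atTop] fun y => Real.exp (c * y))
    {z : ℂ} (hz : z.im ≤ 0) : ‖g z‖ ≤ M * Real.exp (-(c * z.im)) := by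
  set F : ℂ → ℂ := fun w => g (-I * w) * Complex.exp (-c * w)
  have hF : ∀ w, ‖F w‖ = ‖g (-I * w)‖ * Real.exp (-(c * w.re)) := fun w => by
    simp [F, Complex.norm_exp]
  have hrot : Tendsto (fun w : ℂ => -I * w) (cobounded ℂ) (cobounded ℂ) := by
    rw [← tendsto_norm_atTop_iff_cobounded]
    simpa using tendsto_norm_cobounded_atTop
  have hFexp : F =O[cobounded ℂ ⊓ 𝓟 {w | 0 < w.re}]
      fun w => Real.exp ((B + |c|) * ‖w‖ ^ (1 : ℝ)) := by
    have hrotexp : (fun w => g (-I * w)) =O[cobounded ℂ] fun w => Real.exp (B * ‖w‖) := by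
      simpa [Function.comp_def] using hexp.comp_tendsto hrot
    have hcexp : (fun w : ℂ => Complex.exp (-c * w)) =O[cobounded ℂ]
        fun w => Real.exp (|c| * ‖w‖) := by
      refine IsBigO.of_bound 1 (Eventually.of_forall fun w => ?_)
      rw [Complex.norm_exp, Real.norm_of_nonneg (Real.exp_pos _).le, one_mul]
      gcongr
      calc (-c * w).re = -(c * w.re) := by simp
        _ ≤ |c * w.re| := neg_le_abs _
        _ ≤ |c| * ‖w‖ := by rw [abs_mul]; gcongr; exact Complex.abs_re_le_norm w
    refine ((hrotexp.mul hcexp).congr_right fun w => ?_).mono inf_le_left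
    rw [← Real.exp_add, Real.rpow_one]
    ring_nf
  have hre : IsBoundedUnder (· ≤ ·) atTop fun x : ℝ => ‖F x‖ := by
    obtain ⟨K, hK⟩ := haxis.bound
    refine isBoundedUnder_of_eventually_le (a := K) ?_
    filter_upwards [hK] with y hy
    rw [Real.norm_of_nonneg (Real.exp_pos _).le] at hy
    rw [hF, Complex.ofReal_re]
    calc ‖g (-I * y)‖ * Real.exp (-(c * y)) ≤ K * Real.exp (c * y) * Real.exp (-(c * y)) := by
          gcongr
      _ = K := by rw [mul_assoc, ← Real.exp_add, add_neg_cancel, Real.exp_zero, mul_one]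
  have him : ∀ x : ℝ, ‖F (x * I)‖ ≤ M := fun x => by
    have hx : -I * (x * I) = x := by ring_nf; simp
    simpa [hF, hx] using hreal x
  have hPL := PhragmenLindelof.right_half_plane_of_bounded_on_real
    (f := F) (by fun_prop : Differentiable ℂ F).diffContOnCl
    ⟨1, one_lt_two, B + |c|, hFexp⟩ hre him (z := I * z) (by simpa using hz)
  have hIz : -I * (I * z) = z := by ring_nf; simp
  rw [hF, hIz, ← le_div_iff₀ (Real.exp_pos _), div_eq_mul_inv, ← Real.exp_neg] at hPL
  simpa using hPL

theorem norm_le_mul_exp_of_bounded_on_real_of_forall_gt {g : ℂ → ℂ} (hg : Differentiable ℂ g)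
    {B : ℝ} (hexp : g =O[cobounded ℂ] fun w => Real.exp (B * ‖w‖)) {M c₀ : ℝ}
    (hreal : ∀ x : ℝ, ‖g x‖ ≤ M)
    (haxis : ∀ c > c₀, (fun y : ℝ => g (-I * y)) =O[atTop] fun y => Real.exp (c * y))
    {z : ℂ} (hz : z.im ≤ 0) : ‖g z‖ ≤ M * Real.exp (-(c₀ * z.im)) :=
  ge_of_tendsto (x := 𝓝[>] c₀) ((Continuous.tendsto (by fun_prop) c₀).mono_left nhdsWithin_le_nhds)
    (eventually_nhdsWithin_of_forall fun c hc =>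
      norm_le_mul_exp_of_bounded_on_real hg hexp hreal (haxis c hc) hz)

theorem isBoundedUnder_log_norm_div_of_norm_le {u : ℝ → ℂ} {C A : ℝ} (hC : 0 < C)
    (hu : ∀ᶠ y in atTop, ‖u y‖ ≤ C * Real.exp (A * y)) :
    IsBoundedUnder (· ≤ ·) atTop fun y => Real.log ‖u y‖ / y := by
  refine isBoundedUnder_of_eventually_le (a := |Real.log C| + |A|) ?_
  filter_upwards [hu, eventually_ge_atTop 1] with y hy hy1
  rw [div_le_iff₀ (by linarith)]
  rcases (norm_nonneg (u y)).eq_or_lt with h0 | h0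
  · rw [← h0, Real.log_zero]
    positivity
  · calc Real.log ‖u y‖ ≤ Real.log (C * Real.exp (A * y)) := Real.log_le_log h0 hy
      _ = Real.log C + A * y := by rw [Real.log_mul hC.ne' (Real.exp_pos _).ne', Real.log_exp]
      _ ≤ |Real.log C| * y + |A| * y := by
          gcongr
          · nlinarith [le_abs_self (Real.log C), abs_nonneg (Real.log C)]
          · exact le_abs_self A
      _ = (|Real.log C| + |A|) * y := by ring

theorem isBigO_exp_of_limsup_log_norm_div_le {u : ℝ → ℂ}
    (hu : IsBoundedUnder (· ≤ ·) atTop fun y => Real.log ‖u y‖ / y) {σ c : ℝ}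
    (hσ : limsup (fun y => Real.log ‖u y‖ / y) atTop ≤ σ) (hc : σ < c) :
    u =O[atTop] fun y => Real.exp (c * y) := by
  refine IsBigO.of_bound 1 ?_
  filter_upwards [eventually_lt_of_limsup_lt (hσ.trans_lt hc) hu, eventually_gt_atTop 0]
    with y hy hy0
  rw [one_mul, Real.norm_of_nonneg (Real.exp_pos _).le]
  rcases (norm_nonneg (u y)).eq_or_lt with h0 | h0
  · rw [← h0]
    positivity
  · exact (Real.log_le_iff_le_exp h0).1 ((div_lt_iff₀ hy0).1 hy).le

theorem stmt8_general (γ : ℝ) (hγ : 0 < γ) (d₀ d₁ : ℂ) (f : ℂ → ℂ)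
    (hf : Differentiable ℂ f)
    (A C : ℝ) (hC : 0 < C)
    (hbd : ∀ z : ℂ, ‖f z‖ ≤ C * Real.exp (A * ‖z‖))
    (htype : Filter.limsup
        (fun y : ℝ => Real.log (‖f (-Complex.I * (y : ℂ))‖) / y) Filter.atTop
      ≤ 2 * γ)
    (C₁ : ℝ)
    (hC₁ : ∀ x : ℝ, x ≠ 0 →
      ‖(x : ℂ) ^ 2 * (f x - (x : ℂ) - d₀ - d₁ * (x : ℂ)⁻¹)‖ ≤ C₁) :
    ∀ z : ℂ, f z = 0 → z.im ≤ 0 → z ≠ 0 →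
      ‖z * (z ^ 2 + d₀ * z + d₁)‖ ≤ C₁ * Real.exp (-2 * γ * z.im) := by
  intro z hfz hzim _
  have hnorm_axis : ∀ᶠ y : ℝ in atTop, ‖-I * (y : ℂ)‖ = y := by
    filter_upwards [eventually_ge_atTop 0] with y hy
    simp [abs_of_nonneg hy]
  have hgrowth := isBigO_scaledRemainder_comp (d₀ := d₀) (d₁ := d₁) (k := id)
    (Eventually.of_forall fun _ => rfl) tendsto_norm_cobounded_atTop
    (IsBigO.of_bound C (Eventually.of_forall fun w => by simpa using hbd w))
    ((le_abs_self A).trans_lt (lt_add_one _)) (by positivity)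
  have hlog_bdd := isBoundedUnder_log_norm_div_of_norm_le hC (u := fun y => f (-I * y))
    (A := A) (by filter_upwards [hnorm_axis] with y hy; simpa only [hy] using hbd (-I * y))
  have haxis (c : ℝ) (hc : c > 2 * γ) :
      (fun y : ℝ => scaledRemainder f d₀ d₁ (-I * y)) =O[atTop] fun y => Real.exp (c * y) :=
    isBigO_scaledRemainder_comp hnorm_axis tendsto_id
      (isBigO_exp_of_limsup_log_norm_div_le hlog_bdd htype (by linarith : 2 * γ < (2 * γ + c) / 2))
      (by linarith) (by linarith)
  have hbound := norm_le_mul_exp_of_bounded_on_real_of_forall_gt hf.scaledRemainder hgrowth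
    (norm_scaledRemainder_ofReal_le hC₁) haxis hzim
  rw [scaledRemainder_of_eq_zero hfz, norm_neg] at hbound
  simpa [mul_assoc] using hbound

theorem stmt8 (γ : ℝ) (hγ : 0 < γ) (d₀ d₁ : ℂ) (f : ℂ → ℂ)
    (hf : Differentiable ℂ f)
    (A C : ℝ) (hA : 0 < A) (hC : 0 < C)
    (hbd : ∀ z : ℂ, ‖f z‖ ≤ C * Real.exp (A * ‖z‖))
    (htype : Filter.limsup
        (fun y : ℝ => Real.log (‖f (-Complex.I * (y : ℂ))‖) / y) Filter.atTop
      ≤ 2 * γ)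
    (C₁ : ℝ)
    (hC₁ : ∀ x : ℝ, x ≠ 0 →
      ‖(x : ℂ) ^ 2 * (f x - (x : ℂ) - d₀ - d₁ * (x : ℂ)⁻¹)‖ ≤ C₁) :
    ∀ z : ℂ, f z = 0 → z.im ≤ 0 → z ≠ 0 →
      ‖z * (z ^ 2 + d₀ * z + d₁)‖ ≤ C₁ * Real.exp (-2 * γ * z.im) :=
  stmt8_general γ hγ d₀ d₁ f hf A C hC hbd htype C₁ hC₁
end

section
/- Let m>0, λ∈ℂ, and let p₁,p₂,q : [0,∞)→ℝ. Suppose f=(f₁,f₂):[0,∞)→ℂ² is differentiable and satisfies the Dirac system, g=(g₁,g₂):[0,∞)→ℂ² is differentiable and satisfies g₁' + q g₁ − (m − p₂ + λ) g₂ = f₂ and g₂' − q g₂ − (m + p₁ − λ) g₁ = −f₁ on [0,∞). If moreover x ↦ f₁(x)² + f₂(x)² is integrable on [0,∞) and g₁(x)f₂(x) − g₂(x)f₁(x) → 0 as x → ∞, then g₁(0)·f₂(0) − g₂(0)·f₁(0) = − ∫_0^∞ ( f₁(t)² + f₂(t)² ) dt. -/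
/-!
Writing `W = g₁ f₂ - g₂ f₁`, the Dirac system and its λ-differentiated version make all terms
involving `q`, `p₁`, `p₂`, `m` and `λ` cancel in `W'`, leaving `W' = f₁² + f₂²`. Since `W → 0` at
infinity and `f₁² + f₂²` is integrable, the fundamental theorem of calculus on `[0, ∞)` gives
`W 0 = -∫₀^∞ (f₁² + f₂²)`.
-/

open MeasureTheory Set Filter Topology

theorem hasDerivWithinAt_dirac_wronskian {s : Set ℝ} {x : ℝ} {q a b : ℝ → ℂ}
    {f₁ f₂ g₁ g₂ : ℝ → ℂ}
    (hf₁ : HasDerivWithinAt f₁ (-q x * f₁ x + a x * f₂ x) s x)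
    (hf₂ : HasDerivWithinAt f₂ (q x * f₂ x + b x * f₁ x) s x)
    (hg₁ : HasDerivWithinAt g₁ (-q x * g₁ x + a x * g₂ x + f₂ x) s x)
    (hg₂ : HasDerivWithinAt g₂ (q x * g₂ x + b x * g₁ x - f₁ x) s x) :
    HasDerivWithinAt (fun y => g₁ y * f₂ y - g₂ y * f₁ y) (f₁ x ^ 2 + f₂ x ^ 2) s x :=
  ((hg₁.mul hf₂).sub (hg₂.mul hf₁)).congr_deriv (by ring)

theorem eq_neg_integral_Ioi_of_hasDerivWithinAt_of_tendsto_zero {a : ℝ} {W w : ℝ → ℂ}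
    (hW : ∀ x ∈ Ici a, HasDerivWithinAt W (w x) (Ici a) x)
    (hw : IntegrableOn w (Ioi a)) (hlim : Tendsto W atTop (𝓝 0)) :
    W a = -∫ t in Ioi a, w t := by
  have hderiv : ∀ x ∈ Ioi a, HasDerivAt W (w x) x := fun x hx =>
    (hW x (mem_Ici_of_Ioi hx)).hasDerivAt (Ici_mem_nhds hx)
  rw [integral_Ioi_of_hasDerivAt_of_tendsto (hW a self_mem_Ici).continuousWithinAt hderiv hw
    hlim]
  ring

theorem stmt11_general (m : ℝ) (lam : ℂ) (p₁ p₂ q : ℝ → ℝ) (f₁ f₂ g₁ g₂ : ℝ → ℂ)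
    (hf₁ : ∀ x ∈ Set.Ici (0 : ℝ), HasDerivWithinAt f₁
      (-(q x : ℂ) * f₁ x + ((m : ℂ) - (p₂ x : ℂ) + lam) * f₂ x) (Set.Ici 0) x)
    (hf₂ : ∀ x ∈ Set.Ici (0 : ℝ), HasDerivWithinAt f₂
      ((q x : ℂ) * f₂ x + ((m : ℂ) + (p₁ x : ℂ) - lam) * f₁ x) (Set.Ici 0) x)
    (hg₁ : ∀ x ∈ Set.Ici (0 : ℝ), HasDerivWithinAt g₁
      (-(q x : ℂ) * g₁ x + ((m : ℂ) - (p₂ x : ℂ) + lam) * g₂ x + f₂ x) (Set.Ici 0) x)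
    (hg₂ : ∀ x ∈ Set.Ici (0 : ℝ), HasDerivWithinAt g₂
      ((q x : ℂ) * g₂ x + ((m : ℂ) + (p₁ x : ℂ) - lam) * g₁ x - f₁ x) (Set.Ici 0) x)
    (hint : IntegrableOn (fun t : ℝ => (f₁ t) ^ 2 + (f₂ t) ^ 2) (Set.Ioi 0))
    (hlim : Filter.Tendsto (fun x : ℝ => g₁ x * f₂ x - g₂ x * f₁ x)
      Filter.atTop (nhds 0)) :
    g₁ 0 * f₂ 0 - g₂ 0 * f₁ 0 = -∫ t in Set.Ioi (0 : ℝ), ((f₁ t) ^ 2 + (f₂ t) ^ 2) :=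
  eq_neg_integral_Ioi_of_hasDerivWithinAt_of_tendsto_zero
    (fun x hx => hasDerivWithinAt_dirac_wronskian (q := fun y => (q y : ℂ))
      (a := fun y => (m : ℂ) - p₂ y + lam) (b := fun y => (m : ℂ) + p₁ y - lam)
      (hf₁ x hx) (hf₂ x hx) (hg₁ x hx) (hg₂ x hx))
    hint hlim

theorem stmt11 (m : ℝ) (hm : 0 < m) (lam : ℂ) (p₁ p₂ q : ℝ → ℝ) (f₁ f₂ g₁ g₂ : ℝ → ℂ)
    (hf₁ : ∀ x ∈ Set.Ici (0 : ℝ), HasDerivWithinAt f₁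
      (-(q x : ℂ) * f₁ x + ((m : ℂ) - (p₂ x : ℂ) + lam) * f₂ x) (Set.Ici 0) x)
    (hf₂ : ∀ x ∈ Set.Ici (0 : ℝ), HasDerivWithinAt f₂
      ((q x : ℂ) * f₂ x + ((m : ℂ) + (p₁ x : ℂ) - lam) * f₁ x) (Set.Ici 0) x)
    (hg₁ : ∀ x ∈ Set.Ici (0 : ℝ), HasDerivWithinAt g₁
      (-(q x : ℂ) * g₁ x + ((m : ℂ) - (p₂ x : ℂ) + lam) * g₂ x + f₂ x) (Set.Ici 0) x)
    (hg₂ : ∀ x ∈ Set.Ici (0 : ℝ), HasDerivWithinAt g₂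
      ((q x : ℂ) * g₂ x + ((m : ℂ) + (p₁ x : ℂ) - lam) * g₁ x - f₁ x) (Set.Ici 0) x)
    (hint : IntegrableOn (fun t : ℝ => (f₁ t) ^ 2 + (f₂ t) ^ 2) (Set.Ioi 0))
    (hlim : Filter.Tendsto (fun x : ℝ => g₁ x * f₂ x - g₂ x * f₁ x)
      Filter.atTop (nhds 0)) :
    g₁ 0 * f₂ 0 - g₂ 0 * f₁ 0 = -∫ t in Set.Ioi (0 : ℝ), ((f₁ t) ^ 2 + (f₂ t) ^ 2) :=
  stmt11_general m lam p₁ p₂ q f₁ f₂ g₁ g₂ hf₁ hf₂ hg₁ hg₂ hint hlim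
end

section
/- Let m>0, γ>0, and let p₁,p₂,q : [0,∞)→ℝ be continuously differentiable on [0,γ] and vanish on (γ,∞). Let λ be real with |λ|>m, k = k(λ) ∈ ℝ∖{0}, and define M, N, 𝕄, 𝕟, σ₃ as in the context; set W(t) = 2ik·𝕟(t) + 𝕄'(t) − 𝕄(t)·𝕟(t) − |M(t)|²·I₂ and A(x) = I₂ − (1/(2ik))·σ₃·𝕄(x). Assume |k| ≥ sup_{x∈[0,γ]} |M(x)|. Then: (1) for each x, A(x) is invertible with operator norm ‖A(x)^{−1}‖ ≤ 2; (2) defining Y⁰(x) = A(x)^{−1}·e^{ikxσ₃}·(1,0)ᵀ and recursively Y^{n+1}(x) = (1/(2ik))·A(x)^{−1}·∫_x^γ e^{iσ₃k(x−t)}·W(t)·Yⁿ(t) dt, one has for every n ≥ 0 and x ∈ [0,γ]: ‖Yⁿ(x)‖ ≤ (2/(n!·|k|ⁿ))·( ∫_x^γ ‖W(s)‖ ds )ⁿ, where ‖·‖ denotes the Euclidean norm on ℂ² and the associated operator norm on 2×2 matrices. -/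
open MeasureTheory Matrix

/-- `v = (p₁ + p₂)/2`. -/
noncomputable def vfun (p₁ p₂ : ℝ → ℝ) (x : ℝ) : ℝ := (p₁ x + p₂ x) / 2

/-- `p = (p₁ − p₂)/2`. -/
noncomputable def pfun (p₁ p₂ : ℝ → ℝ) (x : ℝ) : ℝ := (p₁ x - p₂ x) / 2

/-- `σ₃`. -/
def sigma3 : Matrix (Fin 2) (Fin 2) ℂ := !![1, 0; 0, -1]

/-- `e^{ikθσ₃} = diag(e^{ikθ}, e^{−ikθ})`. -/
noncomputable def Emat (k θ : ℝ) : Matrix (Fin 2) (Fin 2) ℂ :=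
  !![Complex.exp (Complex.I * (k : ℂ) * (θ : ℂ)), 0;
     0, Complex.exp (-(Complex.I * (k : ℂ) * (θ : ℂ)))]

/-! Since `|M| ≤ |k|`, `A(x) = 1 - B(x)` with `‖B(x)‖ ≤ 1/2`, and the Neumann series gives
`‖A(x)⁻¹‖ ≤ 2`. The matrices `e^{ikθσ₃}` are unitary, so one step of the recursion multiplies the
bound by at most `‖A⁻¹‖ / (2|k|) ≤ 1/|k|` under the integral `∫ₓ^γ ‖W(t)‖ ‖Yⁿ(t)‖ dt`, and the
factorials come from `∫ₓ^γ g(t) (∫ₜ^γ g)ⁿ dt = (∫ₓ^γ g)ⁿ⁺¹ / (n+1)`. This identity needs a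
continuous weight `g`; `‖W‖` agrees with one on `(0, γ)` because `M` is `C¹` on `[0, γ]`. -/

open Set
open scoped Nat

theorem NormedRing.norm_inverse_one_sub_le {R : Type*} [NormedRing R] [CompleteSpace R]
    [NormOneClass R] {t : R} (ht : ‖t‖ < 1) : ‖Ring.inverse (1 - t)‖ ≤ (1 - ‖t‖)⁻¹ := by
  rw [NormedRing.inverse_one_sub t ht]
  exact (tsum_geometric_le_of_norm_lt_one t ht).trans_eq (by simp)

section L2OpNorm

open scoped Matrix.Norms.L2Operator

theorem Matrix.isUnit_one_sub_and_l2_opNorm_inv_le {n : Type*} [Fintype n] [DecidableEq n]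
    [Nonempty n] {B : Matrix n n ℂ} (hB : ‖B‖ ≤ 1 / 2) : IsUnit (1 - B) ∧ ‖(1 - B)⁻¹‖ ≤ 2 := by
  have hB1 : ‖B‖ < 1 := by linarith
  refine ⟨isUnit_one_sub_of_norm_lt_one hB1, ?_⟩
  rw [nonsing_inv_eq_ringInverse]
  calc _ ≤ (1 - ‖B‖)⁻¹ := NormedRing.norm_inverse_one_sub_le hB1
    _ ≤ 2 := by rw [inv_le_comm₀ (by linarith) two_pos]; linarith

theorem Matrix.l2_opNorm_antidiag_le {b c : ℂ} {r : ℝ} (hb : ‖b‖ ≤ r) (hc : ‖c‖ ≤ r) :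
    ‖!![0, b; c, 0]‖ ≤ r := by
  set P : Matrix (Fin 2) (Fin 2) ℂ := !![0, 1; 1, 0]
  have hP : ‖P‖ ≤ 1 := by
    have hPP : Pᴴ * P = 1 := by
      ext i j; fin_cases i <;> fin_cases j <;> simp [P, Matrix.mul_apply]
    have := l2_opNorm_conjTranspose_mul_self P
    rw [hPP, norm_one] at this
    nlinarith [norm_nonneg P]
  have hfactor : !![0, b; c, 0] = P * diagonal ![c, b] := by
    ext i j; fin_cases i <;> fin_cases j <;> simp [P]
  have hdiag : ‖diagonal ![c, b]‖ ≤ r := by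
    rw [l2_opNorm_diagonal]
    refine (pi_norm_le_iff_of_nonneg ((norm_nonneg b).trans hb)).mpr fun i => ?_
    fin_cases i <;> assumption
  calc _ ≤ ‖P‖ * ‖diagonal ![c, b]‖ := hfactor ▸ l2_opNorm_mul _ _
    _ ≤ 1 * r := by gcongr
    _ = r := one_mul r

theorem norm_toEuclideanCLM_Emat_le_one (k θ : ℝ) :
    ‖Matrix.toEuclideanCLM (n := Fin 2) (𝕜 := ℂ) (Emat k θ)‖ ≤ 1 := by
  have hdiag : Emat k θ = Matrix.diagonal
      ![Complex.exp (Complex.I * k * θ), Complex.exp (-(Complex.I * k * θ))] := by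
    ext i j; fin_cases i <;> fin_cases j <;> simp [Emat]
  rw [Matrix.l2_opNorm_toEuclideanCLM, hdiag, Matrix.l2_opNorm_diagonal]
  refine (pi_norm_le_iff_of_nonneg zero_le_one).mpr fun i => ?_
  fin_cases i <;> simp [Complex.norm_exp]

theorem Matrix.continuous_norm_toEuclideanCLM {n : Type*} [Fintype n] [DecidableEq n] :
    Continuous fun X : Matrix n n ℂ => ‖Matrix.toEuclideanCLM (n := n) (𝕜 := ℂ) X‖ :=
  continuous_norm

theorem isUnit_one_sub_sigma3_mul_and_norm_inv_le {k : ℝ} (hk : k ≠ 0) {z : ℂ} (hz : ‖z‖ ≤ |k|) :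
    IsUnit (1 - (1 / (2 * Complex.I * k)) • (sigma3 * !![0, (starRingEnd ℂ) z; z, 0])) ∧
      ‖Matrix.toEuclideanCLM (n := Fin 2) (𝕜 := ℂ)
        (1 - (1 / (2 * Complex.I * k)) • (sigma3 * !![0, (starRingEnd ℂ) z; z, 0]))⁻¹‖ ≤ 2 := by
  have hσ : sigma3 * !![0, (starRingEnd ℂ) z; z, 0] = !![0, (starRingEnd ℂ) z; -z, 0] := by
    ext i j; fin_cases i <;> fin_cases j <;> simp [sigma3]
  have hkpos : 0 < |k| := abs_pos.mpr hk
  apply Matrix.isUnit_one_sub_and_l2_opNorm_inv_le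
  calc _ ≤ ‖1 / (2 * Complex.I * k)‖ * ‖sigma3 * !![0, (starRingEnd ℂ) z; z, 0]‖ :=
        norm_smul_le _ _
    _ ≤ 1 / (2 * |k|) * |k| := by
        rw [hσ]
        gcongr
        · simp
        · exact Matrix.l2_opNorm_antidiag_le (by simpa using hz) (by simpa using hz)
    _ = 1 / 2 := by field_simp

end L2OpNorm

theorem integral_mul_pow_primitive {g : ℝ → ℝ} {a b x : ℝ} (hg : ContinuousOn g (Icc a b))
    (hx : x ∈ Icc a b) (n : ℕ) :
    ∫ t in x..b, g t * (∫ s in t..b, g s) ^ n = (∫ s in x..b, g s) ^ (n + 1) / (n + 1) := by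
  set F : ℝ → ℝ := fun t => ∫ s in t..b, g s
  have hsub : uIcc x b ⊆ Icc a b := uIcc_subset_Icc hx (right_mem_Icc.2 (hx.1.trans hx.2))
  have hFc : ContinuousOn F (uIcc x b) :=
    intervalIntegral.continuousOn_primitive_interval_left
      ((hg.mono hsub).integrableOn_compact isCompact_uIcc)
  have hF' : ∀ t ∈ Ioo (min x b) (max x b), HasDerivWithinAt F (-g t) (Ioi t) t := by
    intro t ht
    rw [min_eq_left hx.2, max_eq_right hx.2] at ht
    have htab : t ∈ Ioo a b := ⟨hx.1.trans_lt ht.1, ht.2⟩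
    refine (intervalIntegral.integral_hasDerivAt_left ?_ ?_ ?_).hasDerivWithinAt
    · exact (hg.mono (Icc_subset_Icc_left htab.1.le)).intervalIntegrable_of_Icc ht.2.le
    · exact (hg.mono Ioo_subset_Icc_self).stronglyMeasurableAtFilter isOpen_Ioo t htab
    · exact hg.continuousAt (Icc_mem_nhds htab.1 htab.2)
  have hsubst := intervalIntegral.integral_comp_mul_deriv'' hFc hF' (hg.neg.mono hsub)
    (g := fun u => u ^ n) (continuous_pow n).continuousOn
  simp only [Function.comp_def, integral_pow, intervalIntegral.integral_same, F, mul_neg,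
    intervalIntegral.integral_neg, mul_comm _ (g _), zero_pow n.succ_ne_zero] at hsubst
  linear_combination -hsubst

theorem norm_volterra_iterate_le {𝕜 E : Type*} [RCLike 𝕜] [NormedAddCommGroup E]
    [NormedSpace 𝕜 E] [NormedSpace ℝ E] {a b c C : ℝ} {g : ℝ → ℝ} (hg : ContinuousOn g (Icc a b))
    {L : ℝ → E →L[𝕜] E} {K : ℝ → ℝ → E →L[𝕜] E} {y : ℕ → ℝ → E}
    (hL : ∀ x ∈ Icc a b, ‖L x‖ ≤ c) (hK : ∀ x ∈ Icc a b, ∀ t ∈ Ioo a b, ‖K x t‖ ≤ g t)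
    (hy0 : ∀ x ∈ Icc a b, ‖y 0 x‖ ≤ C)
    (hy : ∀ n x, y (n + 1) x = L x (∫ t in x..b, K x t (y n t))) (n : ℕ) :
    ∀ x ∈ Icc a b, ‖y n x‖ ≤ C * c ^ n / n ! * (∫ t in x..b, g t) ^ n := by
  induction n with
  | zero => simpa using hy0
  | succ n ih =>
    intro x hx
    set B : ℝ → ℝ := fun t => C * c ^ n / n ! * (∫ s in t..b, g s) ^ n
    have hsub : uIcc x b ⊆ Icc a b := uIcc_subset_Icc hx (right_mem_Icc.2 (hx.1.trans hx.2))
    have hgB : ContinuousOn (fun t => g t * B t) (uIcc x b) :=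
      (hg.mono hsub).mul <| continuousOn_const.mul <| .pow
        (intervalIntegral.continuousOn_primitive_interval_left
          ((hg.mono hsub).integrableOn_compact isCompact_uIcc)) n
    have hKy : ∀ᵐ t, t ∈ Ioc x b → ‖K x t (y n t)‖ ≤ g t * B t := by
      filter_upwards [volume.ae_ne b] with t htb ht
      have htab : t ∈ Ioo a b := ⟨hx.1.trans_lt ht.1, ht.2.lt_of_ne htb⟩
      exact (K x t).le_opNorm _ |>.trans <| mul_le_mul (hK x hx t htab)
        (ih t (Ioo_subset_Icc_self htab)) (norm_nonneg _) ((norm_nonneg _).trans (hK x hx t htab))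
    calc ‖y (n + 1) x‖ ≤ c * ‖∫ t in x..b, K x t (y n t)‖ := by
          rw [hy]; exact (L x).le_opNorm _ |>.trans (by gcongr; exact hL x hx)
      _ ≤ c * ∫ t in x..b, g t * B t := by
          gcongr
          · exact (norm_nonneg _).trans (hL x hx)
          · exact intervalIntegral.norm_integral_le_of_norm_le hx.2 hKy hgB.intervalIntegrable
      _ = C * c ^ (n + 1) / (n + 1)! * (∫ t in x..b, g t) ^ (n + 1) := by
          simp only [B, mul_left_comm (g _), intervalIntegral.integral_const_mul,
            integral_mul_pow_primitive hg hx, Nat.factorial_succ]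
          push_cast
          field_simp
          ring

theorem contDiffOn_primitive {E : Type*} [NormedAddCommGroup E] [NormedSpace ℝ E]
    [CompleteSpace E] {f : ℝ → E} {a b : ℝ} (hf : ContinuousOn f (Icc a b)) :
    ContDiffOn ℝ 1 (fun t => ∫ s in a..t, f s) (Icc a b) := by
  rcases lt_or_ge b a with hba | hab
  · simp [Icc_eq_empty_of_lt hba]
  set g := IccExtend hab ((Icc a b).domRestrict f)
  have hg : Continuous g := hf.domRestrict.Icc_extend'
  have hgf : EqOn g f (Icc a b) := fun s hs => IccExtend_of_mem hab _ hs
  have hderiv : deriv (fun t => ∫ s in a..t, g s) = g := funext (hg.deriv_integral g a)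
  refine (contDiff_one_iff_deriv.mpr
    ⟨fun t => (hg.integral_hasStrictDerivAt a t).hasDerivAt.differentiableAt,
      by rwa [hderiv]⟩).contDiffOn.congr fun t ht => ?_
  refine intervalIntegral.integral_congr fun s hs => (hgf ?_).symm
  rw [uIcc_of_le ht.1] at hs
  exact ⟨hs.1, hs.2.trans ht.2⟩

@[fun_prop]
theorem Complex.contDiff_ofReal {n : WithTop ℕ∞} : ContDiff ℝ n ((↑) : ℝ → ℂ) :=
  Complex.ofRealCLM.contDiff

/-- The matrix `W` of the statement, as a function of `2ik`, `M`, `N` and `M'`. -/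
noncomputable def potentialMatrix (κ M N D : ℂ) : Matrix (Fin 2) (Fin 2) ℂ :=
  κ • !![N, 0; 0, (starRingEnd ℂ) N] + !![0, (starRingEnd ℂ) D; D, 0]
    - !![0, (starRingEnd ℂ) M; M, 0] * !![N, 0; 0, (starRingEnd ℂ) N]
    - ((‖M‖ ^ 2 : ℝ) : ℂ) • (1 : Matrix (Fin 2) (Fin 2) ℂ)

theorem ContinuousOn.potentialMatrix {s : Set ℝ} (κ : ℂ) {M N D : ℝ → ℂ}
    (hM : ContinuousOn M s) (hN : ContinuousOn N s) (hD : ContinuousOn D s) :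
    ContinuousOn (fun t => potentialMatrix κ (M t) (N t) (D t)) s := by
  unfold _root_.potentialMatrix
  fun_prop

/-- `deriv M` is junk at `a` and `b`, so `‖W‖` itself need not be continuous on `[a, b]`; inside,
`deriv M` agrees with the continuous `derivWithin M (Icc a b)`. -/
theorem exists_continuousOn_eqOn_norm_potentialMatrix {a b : ℝ} (hab : a < b) (κ : ℂ)
    {M N : ℝ → ℂ} (hM : ContDiffOn ℝ 1 M (Icc a b)) (hN : ContinuousOn N (Icc a b)) :
    ∃ g : ℝ → ℝ, ContinuousOn g (Icc a b) ∧ EqOn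
      (fun t => ‖Matrix.toEuclideanCLM (𝕜 := ℂ) (potentialMatrix κ (M t) (N t) (deriv M t))‖)
      g (Ioo a b) := by
  refine ⟨fun t => ‖Matrix.toEuclideanCLM (𝕜 := ℂ)
    (potentialMatrix κ (M t) (N t) (derivWithin M (Icc a b) t))‖, ?_, fun t ht => ?_⟩
  · exact Matrix.continuous_norm_toEuclideanCLM.comp_continuousOn <| .potentialMatrix κ
      hM.continuousOn hN (hM.continuousOn_derivWithin (uniqueDiffOn_Icc hab) le_rfl)
  · simp only [derivWithin_of_mem_nhds (Icc_mem_nhds ht.1 ht.2)]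

theorem norm_one_div_two_I_mul_smul_le {E : Type*} [NormedAddCommGroup E] [NormedSpace ℂ E]
    {k : ℝ} (hk : k ≠ 0) {T : E →L[ℂ] E} (hT : ‖T‖ ≤ 2) :
    ‖(1 / (2 * Complex.I * k)) • T‖ ≤ 1 / |k| := by
  have hc : ‖1 / (2 * Complex.I * k)‖ = 1 / (2 * |k|) := by simp
  have hkpos : 0 < |k| := abs_pos.mpr hk
  rw [norm_smul, hc]
  calc 1 / (2 * |k|) * ‖T‖ ≤ 1 / (2 * |k|) * 2 := by gcongr
    _ = 1 / |k| := by field_simp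

theorem norm_apply_exp_mul_I_single_le
    (T : EuclideanSpace ℂ (Fin 2) →L[ℂ] EuclideanSpace ℂ (Fin 2)) (k x : ℝ) :
    ‖T ((WithLp.equiv 2 (Fin 2 → ℂ)).symm ![Complex.exp (Complex.I * k * x), 0])‖ ≤ ‖T‖ :=
  (T.le_opNorm _).trans_eq <| by
    simp [EuclideanSpace.norm_eq, Fin.sum_univ_two, Complex.norm_exp]

theorem stmt19_general (m γ : ℝ) (hγ : 0 < γ) (p₁ p₂ q : ℝ → ℝ)
    (hp₁ : ContDiffOn ℝ 1 p₁ (Set.Icc 0 γ)) (hp₂ : ContDiffOn ℝ 1 p₂ (Set.Icc 0 γ))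
    (hq : ContDiffOn ℝ 1 q (Set.Icc 0 γ))
    (lam : ℝ)
    (k : ℝ) (hk0 : k ≠ 0)
    (M N : ℝ → ℂ)
    (hM : ∀ t : ℝ, M t
      = Complex.exp (-Complex.I * ((∫ s in (0 : ℝ)..t, vfun p₁ p₂ s) : ℂ))
        * (((q t : ℂ) + Complex.I * (pfun p₁ p₂ t : ℂ))
          + (Complex.I / 2) * ((p₂ t : ℂ) * ((k / (lam + m) - 1 : ℝ) : ℂ)
            - (p₁ t : ℂ) * (((lam + m) / k - 1 : ℝ) : ℂ))))
    (hN : ∀ t : ℝ, N t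
      = (Complex.I / 2) * ((p₂ t : ℂ) * ((k / (lam + m) - 1 : ℝ) : ℂ)
          + (p₁ t : ℂ) * (((lam + m) / k - 1 : ℝ) : ℂ)))
    (MM NN W A : ℝ → Matrix (Fin 2) (Fin 2) ℂ)
    (hMM : ∀ t : ℝ, MM t = !![0, (starRingEnd ℂ) (M t); M t, 0])
    (hNN : ∀ t : ℝ, NN t = !![N t, 0; 0, (starRingEnd ℂ) (N t)])
    (hW : ∀ t : ℝ, W t
      = (2 * Complex.I * (k : ℂ)) • NN t
        + !![0, (starRingEnd ℂ) (deriv M t); deriv M t, 0]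
        - MM t * NN t
        - (((‖M t‖) ^ 2 : ℝ) : ℂ) • (1 : Matrix (Fin 2) (Fin 2) ℂ))
    (hA : ∀ x : ℝ, A x = 1 - (1 / (2 * Complex.I * (k : ℂ))) • (sigma3 * MM x))
    (hkM : ∀ x ∈ Set.Icc (0 : ℝ) γ, ‖M x‖ ≤ |k|)
    (Y : ℕ → ℝ → EuclideanSpace ℂ (Fin 2))
    (hY0 : ∀ x : ℝ, Y 0 x
      = Matrix.toEuclideanCLM (𝕜 := ℂ) ((A x)⁻¹)
          ((WithLp.equiv 2 (Fin 2 → ℂ)).symm ![Complex.exp (Complex.I * (k : ℂ) * (x : ℂ)), 0]))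
    (hYs : ∀ n : ℕ, ∀ x : ℝ, Y (n + 1) x
      = (1 / (2 * Complex.I * (k : ℂ))) • Matrix.toEuclideanCLM (𝕜 := ℂ) ((A x)⁻¹)
          (∫ t in x..γ, Matrix.toEuclideanCLM (𝕜 := ℂ) (Emat k (x - t))
            (Matrix.toEuclideanCLM (𝕜 := ℂ) (W t) (Y n t)))) :
    (∀ x ∈ Set.Icc (0 : ℝ) γ,
      IsUnit (A x) ∧ ‖Matrix.toEuclideanCLM (𝕜 := ℂ) ((A x)⁻¹)‖ ≤ 2) ∧
    (∀ n : ℕ, ∀ x ∈ Set.Icc (0 : ℝ) γ,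
      ‖Y n x‖
        ≤ (2 / (n.factorial * |k| ^ n))
          * (∫ s in x..γ, ‖Matrix.toEuclideanCLM (𝕜 := ℂ) (W s)‖) ^ n) := by
  have hAinv : ∀ x ∈ Icc 0 γ,
      IsUnit (A x) ∧ ‖Matrix.toEuclideanCLM (𝕜 := ℂ) ((A x)⁻¹)‖ ≤ 2 := fun x hx => by
    rw [hA, hMM]; exact isUnit_one_sub_sigma3_mul_and_norm_inv_le hk0 (hkM x hx)
  refine ⟨hAinv, ?_⟩
  have hMC1 : ContDiffOn ℝ 1 M (Icc 0 γ) := by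
    have hv : ContDiffOn ℝ 1 (fun s => (vfun p₁ p₂ s : ℂ)) (Icc 0 γ) := by unfold vfun; fun_prop
    have hV := contDiffOn_primitive hv.continuousOn
    rw [funext hM]; unfold pfun; fun_prop
  have hNc : ContinuousOn N (Icc 0 γ) :=
    (by rw [funext hN]; fun_prop : ContDiffOn ℝ 1 N (Icc 0 γ)).continuousOn
  obtain ⟨g, hg, hWg⟩ :=
    exists_continuousOn_eqOn_norm_potentialMatrix hγ (2 * Complex.I * k) hMC1 hNc
  have hWpot : ∀ t, W t = potentialMatrix (2 * Complex.I * k) (M t) (N t) (deriv M t) :=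
    fun t => by rw [hW, hMM, hNN]; rfl
  simp only [← hWpot] at hWg
  have hL : ∀ x ∈ Icc 0 γ,
      ‖(1 / (2 * Complex.I * k)) • Matrix.toEuclideanCLM (𝕜 := ℂ) ((A x)⁻¹)‖ ≤ 1 / |k| :=
    fun x hx => norm_one_div_two_I_mul_smul_le hk0 (hAinv x hx).2
  have hK : ∀ x ∈ Icc 0 γ, ∀ t ∈ Ioo 0 γ, ‖(Matrix.toEuclideanCLM (𝕜 := ℂ) (Emat k (x - t))).comp
      (Matrix.toEuclideanCLM (𝕜 := ℂ) (W t))‖ ≤ g t := fun x _ t ht => by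
    refine (ContinuousLinearMap.opNorm_comp_le _ _).trans ?_
    rw [← hWg ht]
    exact mul_le_of_le_one_left (norm_nonneg _) (norm_toEuclideanCLM_Emat_le_one k (x - t))
  have hY0' : ∀ x ∈ Icc 0 γ, ‖Y 0 x‖ ≤ 2 := fun x hx =>
    hY0 x ▸ (norm_apply_exp_mul_I_single_le _ k x).trans (hAinv x hx).2
  intro n x hx
  rw [intervalIntegral.integral_congr_Ioo_of_le hx.2 fun t ht => hWg ⟨hx.1.trans_lt ht.1, ht.2⟩]
  convert norm_volterra_iterate_le hg hL hK hY0' hYs n x hx using 1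
  ring

theorem stmt19 (m γ : ℝ) (hm : 0 < m) (hγ : 0 < γ) (p₁ p₂ q : ℝ → ℝ)
    (hp₁ : ContDiffOn ℝ 1 p₁ (Set.Icc 0 γ)) (hp₂ : ContDiffOn ℝ 1 p₂ (Set.Icc 0 γ))
    (hq : ContDiffOn ℝ 1 q (Set.Icc 0 γ))
    (hp₁0 : ∀ x > γ, p₁ x = 0) (hp₂0 : ∀ x > γ, p₂ x = 0) (hq0 : ∀ x > γ, q x = 0)
    (lam : ℝ) (hlam : m < |lam|)
    (k : ℝ) (hk : (k : ℂ) = qmom m (lam : ℂ)) (hk0 : k ≠ 0)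
    (M N : ℝ → ℂ)
    (hM : ∀ t : ℝ, M t
      = Complex.exp (-Complex.I * ((∫ s in (0 : ℝ)..t, vfun p₁ p₂ s) : ℂ))
        * (((q t : ℂ) + Complex.I * (pfun p₁ p₂ t : ℂ))
          + (Complex.I / 2) * ((p₂ t : ℂ) * ((k / (lam + m) - 1 : ℝ) : ℂ)
            - (p₁ t : ℂ) * (((lam + m) / k - 1 : ℝ) : ℂ))))
    (hN : ∀ t : ℝ, N t
      = (Complex.I / 2) * ((p₂ t : ℂ) * ((k / (lam + m) - 1 : ℝ) : ℂ)
          + (p₁ t : ℂ) * (((lam + m) / k - 1 : ℝ) : ℂ)))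
    (MM NN W A : ℝ → Matrix (Fin 2) (Fin 2) ℂ)
    (hMM : ∀ t : ℝ, MM t = !![0, (starRingEnd ℂ) (M t); M t, 0])
    (hNN : ∀ t : ℝ, NN t = !![N t, 0; 0, (starRingEnd ℂ) (N t)])
    (hW : ∀ t : ℝ, W t
      = (2 * Complex.I * (k : ℂ)) • NN t
        + !![0, (starRingEnd ℂ) (deriv M t); deriv M t, 0]
        - MM t * NN t
        - (((‖M t‖) ^ 2 : ℝ) : ℂ) • (1 : Matrix (Fin 2) (Fin 2) ℂ))
    (hA : ∀ x : ℝ, A x = 1 - (1 / (2 * Complex.I * (k : ℂ))) • (sigma3 * MM x))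
    (hkM : ∀ x ∈ Set.Icc (0 : ℝ) γ, ‖M x‖ ≤ |k|)
    (Y : ℕ → ℝ → EuclideanSpace ℂ (Fin 2))
    (hY0 : ∀ x : ℝ, Y 0 x
      = Matrix.toEuclideanCLM (𝕜 := ℂ) ((A x)⁻¹)
          ((WithLp.equiv 2 (Fin 2 → ℂ)).symm ![Complex.exp (Complex.I * (k : ℂ) * (x : ℂ)), 0]))
    (hYs : ∀ n : ℕ, ∀ x : ℝ, Y (n + 1) x
      = (1 / (2 * Complex.I * (k : ℂ))) • Matrix.toEuclideanCLM (𝕜 := ℂ) ((A x)⁻¹)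
          (∫ t in x..γ, Matrix.toEuclideanCLM (𝕜 := ℂ) (Emat k (x - t))
            (Matrix.toEuclideanCLM (𝕜 := ℂ) (W t) (Y n t)))) :
    (∀ x ∈ Set.Icc (0 : ℝ) γ,
      IsUnit (A x) ∧ ‖Matrix.toEuclideanCLM (𝕜 := ℂ) ((A x)⁻¹)‖ ≤ 2) ∧
    (∀ n : ℕ, ∀ x ∈ Set.Icc (0 : ℝ) γ,
      ‖Y n x‖
        ≤ (2 / (n.factorial * |k| ^ n))
          * (∫ s in x..γ, ‖Matrix.toEuclideanCLM (𝕜 := ℂ) (W s)‖) ^ n) :=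
  stmt19_general m γ hγ p₁ p₂ q hp₁ hp₂ hq lam k hk0 M N hM hN MM NN W A hMM hNN hW hA hkM Y hY0 hYs
end
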